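/- arXiv:1510.01149 — 9 statements merged into one kernel-verified Lean document; each statement's English description precedes it below -/
import Mathlib

section
/- Let D ⊆ ℝⁿ be open and p-convex with respect to the componentwise order (i.e., for all x, y ∈ D with x ≤ y componentwise and all μ ∈ (0,1), μx + (1−μ)y ∈ D), let f : D → ℝⁿ be continuously differentiable, and let φ be a flow of ẋ = f(x) with φ(t,x) ∈ D for all t ≥ 0 and x ∈ D. Then ∂fᵢ/∂xⱼ(x) ≥ 0 for all i ≠ j and all x ∈ D if and only if the system is monotone with respect to the nonnegative orthant, i.e., for all x, y ∈ D with x ≤ y componentwise and all t ≥ 0, φ(t,x) ≤ φ(t,y) componentwise. -/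
/-!
A C¹ field with nonnegative off-diagonal Jacobian entries satisfies Kamke's condition: if
`a ≤ b` and `aᵢ = bᵢ`, then `fᵢ(a) ≤ fᵢ(b)`, by the mean value theorem on the segment `[a, b]`,
along which only the off-diagonal entries of the Jacobian contribute. Kamke's condition gives
monotonicity of the flow: for trajectories `u`, `v` with `u 0 ≤ v 0`, the inequality
`u ≤ v + ε e^{(L+1)t}` (with `L` a Lipschitz constant of `f` near the trajectory of `v`) cannot
break down, because at a first contact in coordinate `j` Kamke's condition bounds the growth of
`uⱼ - vⱼ` by `L ε e^{(L+1)t}`, which is slower than the fence; letting `ε → 0` gives `u ≤ v`.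
Conversely, a monotone flow gives Kamke's condition by differentiating
`φ(t, b)ᵢ - φ(t, a)ᵢ ≥ 0` at `t = 0`, and Kamke's condition gives the sign of `∂ⱼfᵢ` by
differentiating `fᵢ(x + s eⱼ) ≥ fᵢ(x)` at `s = 0`.
-/

open Set Filter Metric Topology

section OneSided

variable {g : ℝ → ℝ} {g' x : ℝ}

theorem HasDerivAt.eventually_lt_nhdsGT (hg : HasDerivAt g g' x) (hg' : 0 < g') :
    ∀ᶠ t in 𝓝[>] x, g x < g t := by
  have hslope : ∀ᶠ t in 𝓝[>] x, 0 < slope g x t :=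
    ((hasDerivAt_iff_tendsto_slope.1 hg).mono_left (nhdsGT_le_nhdsNE x)).eventually_const_lt hg'
  filter_upwards [hslope, self_mem_nhdsWithin] with t hslope_t hxt
  rw [slope_def_field, div_pos_iff_of_pos_right (sub_pos.2 hxt)] at hslope_t
  exact sub_pos.1 hslope_t

theorem HasDerivAt.nonneg_of_eventually_le_nhdsGT (hg : HasDerivAt g g' x)
    (hle : ∀ᶠ t in 𝓝[>] x, g x ≤ g t) : 0 ≤ g' := by
  by_contra! hneg
  obtain ⟨t, hle_t, hlt_t⟩ := (hle.and (hg.neg.eventually_lt_nhdsGT (neg_pos.2 hneg))).exists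
  exact (neg_lt_neg_iff.1 hlt_t).not_ge hle_t

theorem HasDerivAt.eventually_nonneg_nhdsGT (hg : HasDerivAt g g' x) (hx : 0 ≤ g x)
    (hcontact : g x = 0 → 0 < g') : ∀ᶠ t in 𝓝[>] x, 0 ≤ g t := by
  rcases hx.lt_or_eq with hpos | hzero
  · exact nhdsWithin_le_nhds
      ((hg.continuousAt.eventually (lt_mem_nhds hpos)).mono fun _ => le_of_lt)
  · filter_upwards [hg.eventually_lt_nhdsGT (hcontact hzero.symm)] with t ht
    rw [← hzero] at ht
    exact ht.le

end OneSided

theorem ContDiffOn.exists_norm_sub_le_of_isCompact {E F : Type*} [NormedAddCommGroup E]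
    [NormedSpace ℝ E] [ProperSpace E] [NormedAddCommGroup F] [NormedSpace ℝ F] {D K : Set E}
    {f : E → F} (hf : ContDiffOn ℝ 1 f D) (hD : IsOpen D) (hK : IsCompact K) (hKD : K ⊆ D) :
    ∃ r > 0, ∃ L ≥ 0, ∀ y ∈ K, ∀ z ∈ closedBall y r, z ∈ D ∧ ‖f z - f y‖ ≤ L * ‖z - y‖ := by
  obtain ⟨r, hr, hrD⟩ := hK.exists_cthickening_subset_open hD hKD
  obtain ⟨C, hC⟩ := hK.cthickening.exists_bound_of_continuousOn
    ((hf.continuousOn_fderiv_of_isOpen hD le_rfl).mono hrD)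
  refine ⟨r, hr, max C 0, le_max_right _ _, fun y hy z hz => ?_⟩
  have hball : closedBall y r ⊆ D := (closedBall_subset_cthickening hy r).trans hrD
  refine ⟨hball hz, (convex_closedBall y r).norm_image_sub_le_of_norm_hasFDerivWithin_le
    (fun w hw => ((hf.differentiableOn one_ne_zero).differentiableAt
      (hD.mem_nhds (hball hw))).hasFDerivAt.hasFDerivWithinAt)
    (fun w hw => (hC w (closedBall_subset_cthickening hy r hw)).trans (le_max_left _ _))
    (mem_closedBall_self hr.le) hz⟩

variable {ι : Type*} {D : Set (ι → ℝ)} {f : (ι → ℝ) → ι → ℝ}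

/-- Kamke's condition. -/
def QuasimonotoneOn (f : (ι → ℝ) → ι → ℝ) (D : Set (ι → ℝ)) : Prop :=
  ∀ a ∈ D, ∀ b ∈ D, a ≤ b → ∀ i, a i = b i → f a i ≤ f b i

theorem ContinuousLinearMap.apply_nonneg_of_offDiag_nonneg [Fintype ι] [DecidableEq ι]
    (A : (ι → ℝ) →L[ℝ] ι → ℝ) {w : ι → ℝ} (hw : 0 ≤ w) {i : ι} (hwi : w i = 0)
    (hA : ∀ j, j ≠ i → 0 ≤ A (Pi.single j 1) i) : 0 ≤ A w i := by
  rw [pi_eq_sum_univ' w, map_sum, Finset.sum_apply]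
  refine Finset.sum_nonneg fun j _ => ?_
  rw [map_smul, Pi.smul_apply, smul_eq_mul]
  rcases eq_or_ne j i with rfl | hji
  · simp [hwi]
  · exact mul_nonneg (hw j) (hA j hji)

theorem apply_le_apply_of_fderiv_offDiag_nonneg [Fintype ι] [DecidableEq ι] {a b : ι → ℝ}
    (hab : a ≤ b) {i : ι} (hi : a i = b i) (hf : ∀ z ∈ segment ℝ a b, DifferentiableAt ℝ f z)
    (hJ : ∀ z ∈ segment ℝ a b, ∀ j, j ≠ i → 0 ≤ fderiv ℝ f z (Pi.single j 1) i) :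
    f a i ≤ f b i := by
  obtain ⟨z, hz, hmvt⟩ := domain_mvt (f := fun y => f y i)
    (f' := fun z => (ContinuousLinearMap.proj i).comp (fderiv ℝ f z))
    (fun z hz => (hasFDerivAt_pi'.1 (hf z hz).hasFDerivAt i).hasFDerivWithinAt)
    (convex_segment a b) (left_mem_segment ℝ a b) (right_mem_segment ℝ a b)
  have hnonneg : 0 ≤ fderiv ℝ f z (b - a) i :=
    (fderiv ℝ f z).apply_nonneg_of_offDiag_nonneg (sub_nonneg.2 hab) (by simp [hi]) (hJ z hz)
  simp only [ContinuousLinearMap.coe_comp, Function.comp_apply,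
    ContinuousLinearMap.proj_apply] at hmvt
  linarith

theorem quasimonotoneOn_of_fderiv_offDiag_nonneg [Fintype ι] [DecidableEq ι] (hD : IsOpen D)
    (hpconv : ∀ x ∈ D, ∀ y ∈ D, x ≤ y → ∀ μ : ℝ, μ ∈ Ioo (0 : ℝ) 1 → μ • x + (1 - μ) • y ∈ D)
    (hf : DifferentiableOn ℝ f D)
    (hJ : ∀ x ∈ D, ∀ i j : ι, i ≠ j → 0 ≤ fderiv ℝ f x (Pi.single j 1) i) :
    QuasimonotoneOn f D := by
  intro a ha b hb hab i hi
  have hseg : segment ℝ a b ⊆ D := by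
    rw [← openSegment_subset_iff_segment_subset ha hb, openSegment_subset_iff]
    intro μ ν hμ hν hμν
    obtain rfl : ν = 1 - μ := by linarith
    exact hpconv a ha b hb hab μ ⟨hμ, by linarith⟩
  exact apply_le_apply_of_fderiv_offDiag_nonneg hab hi
    (fun z hz => hf.differentiableAt (hD.mem_nhds (hseg hz)))
    (fun z hz j hji => hJ z (hseg hz) i j hji.symm)

theorem QuasimonotoneOn.fderiv_apply_single_nonneg [Fintype ι] [DecidableEq ι]
    (hq : QuasimonotoneOn f D) (hD : IsOpen D) {x : ι → ℝ} (hx : x ∈ D)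
    (hfx : DifferentiableAt ℝ f x) {i j : ι} (hij : i ≠ j) :
    0 ≤ fderiv ℝ f x (Pi.single j 1) i := by
  set e : ι → ℝ := Pi.single j 1
  have hline : HasDerivAt (fun s : ℝ => x + s • e) e 0 := by
    simpa using ((hasDerivAt_id (0 : ℝ)).smul_const e).const_add x
  have hderiv : HasDerivAt (fun s : ℝ => f (x + s • e) i) (fderiv ℝ f x e i) 0 :=
    hasDerivAt_pi.1 (hfx.hasFDerivAt.comp_hasDerivAt_of_eq 0 hline (by simp)) i
  refine hderiv.nonneg_of_eventually_le_nhdsGT ?_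
  have hmem : ∀ᶠ s in 𝓝 (0 : ℝ), x + s • e ∈ D :=
    hline.continuousAt.preimage_mem_nhds (by simpa using hD.mem_nhds hx)
  filter_upwards [nhdsWithin_le_nhds hmem, self_mem_nhdsWithin] with s hs hs0
  have hle : x ≤ x + s • e :=
    le_add_of_nonneg_right (smul_nonneg (le_of_lt hs0) (Pi.single_nonneg.2 zero_le_one))
  simpa using hq x hx _ hs hle i (by simp [e, Pi.single_eq_of_ne hij])

theorem quasimonotoneOn_of_monotone_flow {φ : ℝ → (ι → ℝ) → ι → ℝ}
    (hφ0 : ∀ x ∈ D, φ 0 x = x) (hφ' : ∀ x ∈ D, HasDerivAt (fun t => φ t x) (f x) 0)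
    (hmono : ∀ x ∈ D, ∀ y ∈ D, x ≤ y → ∀ t : ℝ, 0 ≤ t → φ t x ≤ φ t y) :
    QuasimonotoneOn f D := by
  intro a ha b hb hab i hi
  have hderiv : HasDerivAt (fun t => φ t b i - φ t a i) (f b i - f a i) 0 :=
    (hasDerivAt_pi.1 (hφ' b hb) i).sub (hasDerivAt_pi.1 (hφ' a ha) i)
  have hnonneg := hderiv.nonneg_of_eventually_le_nhdsGT (eventually_nhdsWithin_of_forall
    fun t ht => by
      simp only [hφ0 a ha, hφ0 b hb, hi, sub_self, sub_nonneg]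
      exact hmono a ha b hb hab t (le_of_lt ht) i)
  linarith

theorem QuasimonotoneOn.apply_le_add_exp [Fintype ι] (hq : QuasimonotoneOn f D)
    {u v : ℝ → ι → ℝ} {T r L ε : ℝ} (hε : 0 < ε) (hL : 0 ≤ L) (hεr : ε * Real.exp ((L + 1) * T) ≤ r)
    (hlip : ∀ t ∈ Icc 0 T, ∀ c ∈ Icc 0 r,
      (fun k => v t k + c) ∈ D ∧ ∀ j, f (fun k => v t k + c) j ≤ f (v t) j + L * c)
    (huD : ∀ t ∈ Icc 0 T, u t ∈ D)
    (hu' : ∀ t ∈ Icc 0 T, HasDerivAt u (f (u t)) t)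
    (hv' : ∀ t ∈ Icc 0 T, HasDerivAt v (f (v t)) t) (h0 : u 0 ≤ v 0) :
    ∀ t ∈ Icc 0 T, ∀ j, u t j ≤ v t j + ε * Real.exp ((L + 1) * t) := by
  set B : ℝ → ℝ := fun t => ε * Real.exp ((L + 1) * t) with hBdef
  have hB' : ∀ t, HasDerivAt B ((L + 1) * B t) t := fun t => by
    simpa [hBdef, mul_comm, mul_left_comm] using
      (((hasDerivAt_id t).const_mul (L + 1)).exp).const_mul ε
  have hBpos : ∀ t, 0 < B t := fun t => mul_pos hε (Real.exp_pos _)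
  have hBr : ∀ t ∈ Icc 0 T, B t ≤ r := fun t ht => le_trans (mul_le_mul_of_nonneg_left
    (Real.exp_le_exp.2 (mul_le_mul_of_nonneg_left ht.2 (by linarith))) hε.le) hεr
  set w : ℝ → ι → ℝ := fun t k => v t k + B t
  have hgap : ∀ j, ∀ t ∈ Icc 0 T,
      HasDerivAt (fun t => w t j - u t j) (f (v t) j + (L + 1) * B t - f (u t) j) t :=
    fun j t ht =>
      ((hasDerivAt_pi.1 (hv' t ht) j).add (hB' t)).sub (hasDerivAt_pi.1 (hu' t ht) j)
  have hclosed : IsClosed ({t | u t ≤ w t} ∩ Icc 0 T) := by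
    rw [inter_comm]
    refine ContinuousOn.preimage_isClosed_of_isClosed (f := fun t => (u t, w t))
      (fun t ht => ?_) isClosed_Icc (isClosed_le continuous_fst continuous_snd)
    exact ((hu' t ht).continuousAt.prodMk (continuousAt_pi.2 fun k =>
      ((hasDerivAt_pi.1 (hv' t ht) k).add (hB' t)).continuousAt)).continuousWithinAt
  have hstart : u 0 ≤ w 0 := fun j => (h0 j).trans (le_add_of_nonneg_right (hBpos 0).le)
  refine fun t ht j => IsClosed.Icc_subset_of_forall_mem_nhdsWithin hclosed hstart
    (fun x ⟨hxS, hx⟩ => ?_) ht j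
  have hxIcc : x ∈ Icc 0 T := Ico_subset_Icc_self hx
  have hev : ∀ᶠ t in 𝓝[>] x, ∀ j, 0 ≤ w t j - u t j := eventually_all.2 fun j =>
    (hgap j x hxIcc).eventually_nonneg_nhdsGT (sub_nonneg.2 (hxS j)) fun hcontact => by
      obtain ⟨hwD, hwf⟩ := hlip x hxIcc (B x) ⟨(hBpos x).le, hBr x hxIcc⟩
      have hkamke := hq (u x) (huD x hxIcc) (w x) hwD hxS j (by linarith)
      linarith [hwf j, hBpos x]
  filter_upwards [hev] with t ht k using sub_nonneg.1 (ht k)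

theorem QuasimonotoneOn.le_of_hasDerivAt [Fintype ι] (hq : QuasimonotoneOn f D) (hD : IsOpen D)
    (hf : ContDiffOn ℝ 1 f D) {u v : ℝ → ι → ℝ} {T : ℝ} (hT : 0 ≤ T)
    (huD : ∀ t ∈ Icc 0 T, u t ∈ D) (hvD : ∀ t ∈ Icc 0 T, v t ∈ D)
    (hu' : ∀ t ∈ Icc 0 T, HasDerivAt u (f (u t)) t)
    (hv' : ∀ t ∈ Icc 0 T, HasDerivAt v (f (v t)) t) (h0 : u 0 ≤ v 0) : u T ≤ v T := by
  have hK : IsCompact (v '' Icc 0 T) := isCompact_Icc.image_of_continuousOn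
    fun t ht => (hv' t ht).continuousAt.continuousWithinAt
  obtain ⟨r, hr, L, hL, hlip⟩ :=
    hf.exists_norm_sub_le_of_isCompact hD hK (image_subset_iff.2 hvD)
  have hlip' : ∀ t ∈ Icc 0 T, ∀ c ∈ Icc 0 r,
      (fun k => v t k + c) ∈ D ∧ ∀ j, f (fun k => v t k + c) j ≤ f (v t) j + L * c := by
    intro t ht c hc
    have hshift : (fun k => v t k + c) - v t = fun _ => c := by ext; simp
    have hdist : ‖(fun k => v t k + c) - v t‖ ≤ c := by
      rw [hshift]
      exact (pi_norm_const_le c).trans (by simp [abs_of_nonneg hc.1])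
    obtain ⟨hmem, hnorm⟩ :=
      hlip (v t) (mem_image_of_mem v ht) _ (mem_closedBall_iff_norm.2 (hdist.trans hc.2))
    refine ⟨hmem, fun j => ?_⟩
    have hj := (le_abs_self _).trans ((norm_le_pi_norm (f _ - f (v t)) j).trans hnorm)
    simp only [Pi.sub_apply] at hj
    linarith [mul_le_mul_of_nonneg_left hdist hL]
  intro j
  refine le_of_forall_pos_le_add fun δ hδ => ?_
  have hεexp : min r δ / Real.exp ((L + 1) * T) * Real.exp ((L + 1) * T) = min r δ :=
    div_mul_cancel₀ _ (Real.exp_pos _).ne'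
  have hfence := hq.apply_le_add_exp (div_pos (lt_min hr hδ) (Real.exp_pos _)) hL
    (hεexp.le.trans (min_le_left _ _)) hlip' huD hu' hv' h0 T ⟨hT, le_rfl⟩ j
  linarith [min_le_right r δ]

/-- **Kamke–Müller conditions.** For a continuously differentiable vector field `f` on an
open, p-convex set `D`, nonnegativity of the off-diagonal entries of the Jacobian on `D` is
equivalent to monotonicity of the flow with respect to the componentwise (nonnegative orthant)
order. -/
theorem stmt_0 {n : ℕ} (D : Set (Fin n → ℝ)) (hD : IsOpen D)
    (hpconv : ∀ x ∈ D, ∀ y ∈ D, x ≤ y → ∀ μ : ℝ, μ ∈ Set.Ioo (0 : ℝ) 1 →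
      μ • x + (1 - μ) • y ∈ D)
    (f : (Fin n → ℝ) → (Fin n → ℝ)) (hf : ContDiffOn ℝ 1 f D)
    (φ : ℝ → (Fin n → ℝ) → (Fin n → ℝ))
    (hφ0 : ∀ x ∈ D, φ 0 x = x)
    (hφD : ∀ t : ℝ, 0 ≤ t → ∀ x ∈ D, φ t x ∈ D)
    (hφ' : ∀ x ∈ D, ∀ t : ℝ, 0 ≤ t → HasDerivAt (fun τ => φ τ x) (f (φ t x)) t) :
    (∀ x ∈ D, ∀ i j : Fin n, i ≠ j → 0 ≤ fderiv ℝ f x (Pi.single j 1) i) ↔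
      (∀ x ∈ D, ∀ y ∈ D, x ≤ y → ∀ t : ℝ, 0 ≤ t → φ t x ≤ φ t y) := by
  have hfdiff : DifferentiableOn ℝ f D := hf.differentiableOn one_ne_zero
  constructor
  · intro hJ x hx y hy hxy t ht
    have hq := quasimonotoneOn_of_fderiv_offDiag_nonneg hD hpconv hfdiff hJ
    exact hq.le_of_hasDerivAt hD hf ht
      (fun s hs => hφD s hs.1 x hx) (fun s hs => hφD s hs.1 y hy)
      (fun s hs => hφ' x hx s hs.1) (fun s hs => hφ' y hy s hs.1)
      (by rwa [hφ0 x hx, hφ0 y hy])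
  · intro hmono x hx i j hij
    have hq : QuasimonotoneOn f D := quasimonotoneOn_of_monotone_flow hφ0
      (fun x hx => by simpa [hφ0 x hx] using hφ' x hx 0 le_rfl) hmono
    exact hq.fderiv_apply_single_nonneg hD hx (hfdiff.differentiableAt (hD.mem_nhds hx)) hij
end

section
/- Let A ∈ ℝ^{n×n} with n ≥ 2, let λ₁ ∈ ℝ and λ₂, …, λₙ ∈ ℂ satisfy λ₁ < 0 and λ₁ > Re(λᵢ) for all i ≥ 2, let w₁ ∈ ℝⁿ satisfy Aᵀ w₁ = λ₁ w₁, and let w₂, …, wₙ ∈ ℂⁿ satisfy (Aᵀ as a complex matrix) wᵢ = λᵢ wᵢ. For positive scalars α₂, …, αₙ define the set K_α = { y ∈ ℝⁿ : Σ_{i=2}^n αᵢ |wᵢᵀ y|² ≤ (w₁ᵀ y)² and w₁ᵀ y ≥ 0 }. Then the system ẋ = Ax is K_α-positive: for every t ≥ 0 and every y ∈ K_α, e^{At} y ∈ K_α. -/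
/-!
Since `w₁` and the `wᵢ` are left eigenvectors of `A`, the coordinates `w₁ᵀ y` and `wᵢᵀ y` of
`y(t) = e^{At} y` evolve independently: `w₁ᵀ y(t) = e^{λ₁ t} w₁ᵀ y` and
`wᵢᵀ y(t) = e^{λᵢ t} wᵢᵀ y`. As `Re λᵢ < λ₁`, for `t ≥ 0` every `|wᵢᵀ y(t)|` shrinks at least by
the factor `e^{λ₁ t}` by which `w₁ᵀ y(t)` is scaled, and both defining inequalities of `K_α` are
homogeneous of degree two in these coordinates.
-/

/-- The cone `K_α = { y : Σ_{i≥2} αᵢ |wᵢᵀ y|² ≤ (w₁ᵀ y)², w₁ᵀ y ≥ 0 }` built from the left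
eigenvectors `w₁ ∈ ℝⁿ` and `w₂, …, wₙ ∈ ℂⁿ`. -/
def Kcone {n : ℕ} [NeZero n] (w1 : Fin n → ℝ) (w : Fin n → Fin n → ℂ)
    (α : Fin n → ℝ) : Set (Fin n → ℝ) :=
  {y : Fin n → ℝ |
    (∑ i ∈ Finset.univ.erase (0 : Fin n),
        α i * ‖∑ j, w i j * (y j : ℂ)‖ ^ 2) ≤ (∑ j, w1 j * y j) ^ 2 ∧
    0 ≤ ∑ j, w1 j * y j}

open NormedSpace Matrix

namespace Matrix

variable {m 𝕜 : Type*} [Fintype m] [DecidableEq m] [RCLike 𝕜]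

open scoped Norms.Operator in
theorem exp_mulVec_of_mulVec_eq_smul {M : Matrix m m 𝕜} {v : m → 𝕜} {μ : 𝕜}
    (h : M *ᵥ v = μ • v) : exp M *ᵥ v = exp μ • v := by
  have hpow (k : ℕ) : M ^ k *ᵥ v = μ ^ k • v := by
    induction k with
    | zero => simp
    | succ k ih => rw [pow_succ', ← mulVec_mulVec, ih, mulVec_smul, h, smul_smul, pow_succ]
  have hM := (exp_series_hasSum_exp' (𝕂 := 𝕜) M).map (mulVec.addMonoidHomLeft v)
    (continuous_id.matrix_mulVec continuous_const)
  have hμ := (exp_series_hasSum_exp' (𝕂 := 𝕜) μ).smul_const v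
  refine hM.unique (hμ.congr_fun fun k => ?_)
  show (_ • M ^ k) *ᵥ v = _
  rw [smul_mulVec, hpow, smul_smul, smul_eq_mul]

theorem dotProduct_exp_mulVec_of_transpose_mulVec_eq_smul {M : Matrix m m 𝕜} {w : m → 𝕜}
    {μ : 𝕜} (h : Mᵀ *ᵥ w = μ • w) (y : m → 𝕜) : w ⬝ᵥ (exp M *ᵥ y) = exp μ * (w ⬝ᵥ y) := by
  rw [dotProduct_mulVec, ← mulVec_transpose, ← exp_transpose,
    exp_mulVec_of_mulVec_eq_smul h, smul_dotProduct, smul_eq_mul]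

open scoped Norms.Operator in
theorem exp_map_ofReal (A : Matrix m m ℝ) :
    (exp A).map Complex.ofReal = exp (A.map Complex.ofReal) :=
  map_exp Complex.ofRealHom.mapMatrix (continuous_id.matrix_map Complex.continuous_ofReal) A

end Matrix

section Kcone

variable {n : ℕ} [NeZero n] {w1 : Fin n → ℝ} {w : Fin n → Fin n → ℂ} {α : Fin n → ℝ}

theorem mem_Kcone_iff {y : Fin n → ℝ} :
    y ∈ Kcone w1 w α ↔
      ∑ i ∈ Finset.univ.erase 0, α i * ‖w i ⬝ᵥ (Complex.ofReal ∘ y)‖ ^ 2 ≤ (w1 ⬝ᵥ y) ^ 2 ∧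
        0 ≤ w1 ⬝ᵥ y :=
  Iff.rfl

theorem mem_Kcone_of_dominated_scaling (hα : ∀ i ≠ 0, 0 < α i) {y z : Fin n → ℝ}
    (hy : y ∈ Kcone w1 w α) {c : ℝ} (hc : 0 ≤ c) (h1 : w1 ⬝ᵥ z = c * (w1 ⬝ᵥ y))
    (hw : ∀ i ≠ 0, ‖w i ⬝ᵥ (Complex.ofReal ∘ z)‖ ≤ c * ‖w i ⬝ᵥ (Complex.ofReal ∘ y)‖) :
    z ∈ Kcone w1 w α := by
  rw [mem_Kcone_iff] at hy ⊢
  obtain ⟨hy_sum, hy_pos⟩ := hy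
  refine ⟨?_, h1 ▸ mul_nonneg hc hy_pos⟩
  calc ∑ i ∈ Finset.univ.erase 0, α i * ‖w i ⬝ᵥ (Complex.ofReal ∘ z)‖ ^ 2
      ≤ ∑ i ∈ Finset.univ.erase 0, c ^ 2 * (α i * ‖w i ⬝ᵥ (Complex.ofReal ∘ y)‖ ^ 2) := by
        refine Finset.sum_le_sum fun i hi => ?_
        have hi0 := Finset.ne_of_mem_erase hi
        rw [mul_left_comm, ← mul_pow]
        gcongr
        · exact (hα i hi0).le
        · exact hw i hi0
    _ = c ^ 2 * ∑ i ∈ Finset.univ.erase 0, α i * ‖w i ⬝ᵥ (Complex.ofReal ∘ y)‖ ^ 2 :=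
        (Finset.mul_sum _ _ _).symm
    _ ≤ c ^ 2 * (w1 ⬝ᵥ y) ^ 2 := by gcongr
    _ = (w1 ⬝ᵥ z) ^ 2 := by rw [h1, mul_pow]

end Kcone

theorem stmt_3_general {n : ℕ} [NeZero n] (A : Matrix (Fin n) (Fin n) ℝ)
    (l₁ : ℝ) (lam : Fin n → ℂ)
    (hdom : ∀ i : Fin n, i ≠ 0 → (lam i).re < l₁)
    (w1 : Fin n → ℝ) (hw1 : A.transpose.mulVec w1 = l₁ • w1)
    (w : Fin n → Fin n → ℂ)
    (hw : ∀ i : Fin n, i ≠ 0 →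
      (A.map Complex.ofReal).transpose.mulVec (w i) = lam i • w i)
    (α : Fin n → ℝ) (hα : ∀ i : Fin n, i ≠ 0 → 0 < α i) :
    ∀ t : ℝ, 0 ≤ t → ∀ y ∈ Kcone w1 w α,
      (NormedSpace.exp (t • A)).mulVec y ∈ Kcone w1 w α := by
  intro t ht y hy
  refine mem_Kcone_of_dominated_scaling hα hy (Real.exp_nonneg (t * l₁)) ?_ fun i hi => ?_
  · rw [Real.exp_eq_exp_ℝ]
    exact dotProduct_exp_mulVec_of_transpose_mulVec_eq_smul
      (by rw [transpose_smul, smul_mulVec, hw1, smul_smul]) y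
  · have hcomplexify : Complex.ofReal ∘ (exp (t • A) *ᵥ y)
        = exp ((t : ℂ) • A.map Complex.ofReal) *ᵥ (Complex.ofReal ∘ y) := by
      rw [← map_smul' _ t A Complex.ofReal_mul, ← exp_map_ofReal]
      exact funext (RingHom.map_mulVec Complex.ofRealHom _ _)
    rw [hcomplexify, dotProduct_exp_mulVec_of_transpose_mulVec_eq_smul
      (by rw [transpose_smul, smul_mulVec, hw i hi, smul_smul]), ← Complex.exp_eq_exp_ℂ,
      norm_mul, Complex.norm_exp, Complex.re_ofReal_mul]
    gcongr
    exact (hdom i hi).le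

/-- If `λ₁ < 0` is a real eigenvalue of `Aᵀ` with left eigenvector `w₁ ∈ ℝⁿ`, dominating the
real parts of the remaining eigenvalues `λ₂, …, λₙ` with left eigenvectors `w₂, …, wₙ ∈ ℂⁿ`,
then the system `ẋ = Ax` is `K_α`-positive for any positive scalars `α₂, …, αₙ`. -/
theorem stmt_3 {n : ℕ} [NeZero n] (hn : 2 ≤ n) (A : Matrix (Fin n) (Fin n) ℝ)
    (l₁ : ℝ) (lam : Fin n → ℂ) (hneg : l₁ < 0)
    (hdom : ∀ i : Fin n, i ≠ 0 → (lam i).re < l₁)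
    (w1 : Fin n → ℝ) (hw1 : A.transpose.mulVec w1 = l₁ • w1)
    (w : Fin n → Fin n → ℂ)
    (hw : ∀ i : Fin n, i ≠ 0 →
      (A.map Complex.ofReal).transpose.mulVec (w i) = lam i • w i)
    (α : Fin n → ℝ) (hα : ∀ i : Fin n, i ≠ 0 → 0 < α i) :
    ∀ t : ℝ, 0 ≤ t → ∀ y ∈ Kcone w1 w α,
      (NormedSpace.exp (t • A)).mulVec y ∈ Kcone w1 w α :=
  stmt_3_general A l₁ lam hdom w1 hw1 w hw α hα
end

section
/- Let C ⊆ D be an open, forward-invariant set (φ(t,x) ∈ C for all t ≥ 0, x ∈ C), let K be a closed positive cone, suppose the map x ↦ φ(t,x) is continuously differentiable on C for each t ≥ 0, and suppose the system ẋ = f(x) is uniformly eventually monotone on C with respect to K, with uniform time τ₀ ≥ 0. If f(x) ∈ K for some x ∈ C, then f(φ(t,x)) ∈ K for all t ≥ τ₀; consequently φ(t + Δt, x) ⪰_K φ(t,x) for all Δt > 0 and t ≥ τ₀. -/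
/-!
Uniqueness of solutions makes `φ` a semiflow, `φ (t + s) = φ t ∘ φ s`, and differentiating this
at `s = 0` shows that `Dφ_t(x)` sends `f x` to `f (φ t x)`. For `t ≥ τ₀` the map `φ t` is
`K`-monotone on the open set `C`, so its derivative, a limit of difference quotients along
directions in `K`, maps `K` into the closed cone `K`; hence `f (φ t x) ∈ K`. Finally
`φ (t + Δt) x - φ t x` is the integral of `f (φ s x)` over `[t, t + Δt]`, and a closed convex cone
contains such integrals.
-/

open Set Filter Topology MeasureTheory

variable {E F : Type*} [NormedAddCommGroup E] [NormedSpace ℝ E]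
  [NormedAddCommGroup F] [NormedSpace ℝ F]

theorem ContDiffOn.locallyLipschitzOn_of_isOpen {D : Set E} {f : E → F}
    (hf : ContDiffOn ℝ 1 f D) (hD : IsOpen D) : LocallyLipschitzOn D f := by
  intro x hx
  obtain ⟨K, t, ht, hK⟩ := (hf.contDiffAt (hD.mem_nhds hx)).exists_lipschitzOnWith
  exact ⟨K, t, mem_nhdsWithin_of_mem_nhds ht, hK⟩

/-- `f` is Lipschitz on the compact union of the two trajectories. -/
theorem ODE_solution_unique_of_contDiffOn {D : Set E} {f : E → E} (hD : IsOpen D)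
    (hf : ContDiffOn ℝ 1 f D) {u v : ℝ → E} {a b : ℝ}
    (hu : ∀ r ∈ Icc a b, HasDerivAt u (f (u r)) r) (huD : MapsTo u (Icc a b) D)
    (hv : ∀ r ∈ Icc a b, HasDerivAt v (f (v r)) r) (hvD : MapsTo v (Icc a b) D)
    (hab : u a = v a) : EqOn u v (Icc a b) := by
  have hu_cont : ContinuousOn u (Icc a b) := HasDerivAt.continuousOn hu
  have hv_cont : ContinuousOn v (Icc a b) := HasDerivAt.continuousOn hv
  set S := u '' Icc a b ∪ v '' Icc a b
  have hS : IsCompact S :=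
    (isCompact_Icc.image_of_continuousOn hu_cont).union
      (isCompact_Icc.image_of_continuousOn hv_cont)
  obtain ⟨L, hL⟩ := ((hf.locallyLipschitzOn_of_isOpen hD).mono
    (union_subset huD.image_subset hvD.image_subset)).exists_lipschitzOnWith_of_compact hS
  exact ODE_solution_unique_of_mem_Icc_right (v := fun _ => f) (s := fun _ => S)
    (fun _ _ => hL) hu_cont
    (fun r hr => (hu r (Ico_subset_Icc_self hr)).hasDerivWithinAt)
    (fun r hr => Or.inl (mem_image_of_mem u (Ico_subset_Icc_self hr))) hv_cont
    (fun r hr => (hv r (Ico_subset_Icc_self hr)).hasDerivWithinAt)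
    (fun r hr => Or.inr (mem_image_of_mem v (Ico_subset_Icc_self hr))) hab

theorem HasFDerivAt.apply_mem_of_sub_mem {g : E → F} {A : E →L[ℝ] F} {C : Set E}
    {KE : Set E} {KF : Set F} {x v : E} (hg : HasFDerivAt g A x) (hC : IsOpen C) (hx : x ∈ C)
    (hKE_smul : ∀ c : ℝ, 0 ≤ c → ∀ y ∈ KE, c • y ∈ KE) (hKF : IsClosed KF)
    (hKF_smul : ∀ c : ℝ, 0 ≤ c → ∀ y ∈ KF, c • y ∈ KF)
    (hmono : ∀ y ∈ C, ∀ z ∈ C, y - z ∈ KE → g y - g z ∈ KF) (hv : v ∈ KE) : A v ∈ KF := by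
  have hline : HasDerivAt (fun h : ℝ => g (x + h • v)) (A v) 0 := by
    have : HasDerivAt (fun h : ℝ => x + h • v) v 0 := by
      simpa using ((hasDerivAt_id (0 : ℝ)).smul_const v).const_add x
    exact (by simpa using hg : HasFDerivAt g A (x + (0 : ℝ) • v)).comp_hasDerivAt 0 this
  have hslope : Tendsto (slope (fun h : ℝ => g (x + h • v)) 0) (𝓝[>] 0) (𝓝 (A v)) :=
    (hasDerivAt_iff_tendsto_slope.mp hline).mono_left
      (nhdsWithin_mono 0 fun h hh => ne_of_gt hh)
  have hnear : ∀ᶠ h : ℝ in 𝓝 0, x + h • v ∈ C :=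
    (show ContinuousAt (fun h : ℝ => x + h • v) 0 by fun_prop).eventually_mem
      (by simpa using hC.mem_nhds hx)
  refine hKF.mem_of_tendsto hslope ?_
  filter_upwards [nhdsWithin_le_nhds hnear, self_mem_nhdsWithin] with h hC' (hpos : 0 < h)
  have hstep : g (x + h • v) - g x ∈ KF :=
    hmono _ hC' _ hx (by simpa using hKE_smul h hpos.le v hv)
  simpa [slope_def_module] using hKF_smul h⁻¹ (inv_nonneg.2 hpos.le) _ hstep

theorem sub_mem_of_hasDerivAt_mem [CompleteSpace E] {K : Set E} (hK : IsClosed K)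
    (hK_smul : ∀ c : ℝ, 0 ≤ c → ∀ y ∈ K, c • y ∈ K) (hK_add : ∀ y ∈ K, ∀ z ∈ K, y + z ∈ K)
    {g g' : ℝ → E} {a b : ℝ} (hab : a < b) (hg : ∀ s ∈ Icc a b, HasDerivAt g (g' s) s)
    (hg' : ContinuousOn g' (Icc a b)) (hg'K : ∀ s ∈ Icc a b, g' s ∈ K) : g b - g a ∈ K := by
  have hKconv : Convex ℝ K := fun y hy z hz c d hc hd _ =>
    hK_add _ (hK_smul c hc y hy) _ (hK_smul d hd z hz)
  have hftc : ∫ s in a..b, g' s = g b - g a :=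
    intervalIntegral.integral_eq_sub_of_hasDerivAt
      (fun s hs => hg s (by rwa [uIcc_of_le hab.le] at hs))
      (hg'.intervalIntegrable_of_Icc hab.le)
  have havg : ⨍ s in Ioc a b, g' s ∈ K :=
    hKconv.set_average_mem hK (by simp [hab]) (by simp)
      ((ae_restrict_iff' measurableSet_Ioc).2 (ae_of_all _ fun s hs => hg'K s (Ioc_subset_Icc_self hs)))
      (hg'.integrableOn_Icc.mono_set Ioc_subset_Icc_self)
  rw [setAverage_eq, ← intervalIntegral.integral_of_le hab.le, hftc] at havg
  simpa [smul_inv_smul₀ (sub_pos.2 hab).ne', hab.le] using hK_smul (b - a) (sub_pos.2 hab).le _ havg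

section Flow

variable {D C : Set E} {f : E → E} {φ : ℝ → E → E}

theorem flow_add (hD : IsOpen D) (hf : ContDiffOn ℝ 1 f D) (hφ0 : ∀ x ∈ D, φ 0 x = x)
    (hφ' : ∀ x ∈ D, ∀ t : ℝ, 0 ≤ t → HasDerivAt (fun τ => φ τ x) (f (φ t x)) t)
    (hCD : C ⊆ D) (hCinv : ∀ t : ℝ, 0 ≤ t → ∀ x ∈ C, φ t x ∈ C)
    {x : E} (hx : x ∈ C) {s t : ℝ} (hs : 0 ≤ s) (ht : 0 ≤ t) :
    φ (t + s) x = φ t (φ s x) := by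
  have hsx : φ s x ∈ C := hCinv s hs x hx
  have hshift : ∀ r ∈ Icc 0 t, HasDerivAt (fun r => φ (r + s) x) (f (φ (r + s) x)) r :=
    fun r hr => by
      simpa [Function.comp_def] using
        (hφ' x (hCD hx) (r + s) (by linarith [hr.1])).scomp r ((hasDerivAt_id r).add_const s)
  simpa using ODE_solution_unique_of_contDiffOn hD hf hshift
    (fun r hr => hCD (hCinv (r + s) (by linarith [hr.1]) x hx))
    (fun r hr => hφ' _ (hCD hsx) r hr.1) (fun r hr => hCD (hCinv r hr.1 _ hsx))
    (by simp [hφ0 _ (hCD hsx)]) ⟨ht, le_rfl⟩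

theorem HasFDerivAt.apply_vectorField_eq {x : E} {t : ℝ} {A : E →L[ℝ] E}
    (hA : HasFDerivAt (φ t) A x) (hφ0 : φ 0 x = x)
    (hφ' : ∀ s : ℝ, 0 ≤ s → HasDerivAt (fun τ => φ τ x) (f (φ s x)) s)
    (hadd : ∀ s : ℝ, 0 ≤ s → φ (t + s) x = φ t (φ s x)) (ht : 0 ≤ t) :
    A (f x) = f (φ t x) := by
  have hinit : HasDerivAt (fun s => φ s x) (f x) 0 := by simpa [hφ0] using hφ' 0 le_rfl
  have hcomp : HasDerivAt (fun s => φ t (φ s x)) (A (f x)) 0 :=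
    (by rwa [hφ0] : HasFDerivAt (φ t) A (φ 0 x)).comp_hasDerivAt 0 hinit
  have hshift : HasDerivAt (fun s => φ (t + s) x) (f (φ t x)) 0 := by
    simpa [Function.comp_def] using
      (by simpa using hφ' t ht : HasDerivAt (fun τ => φ τ x) (f (φ t x)) (t + 0)).scomp 0
        ((hasDerivAt_id (0 : ℝ)).const_add t)
  exact (uniqueDiffOn_Ici 0 0 self_mem_Ici).eq_deriv _
    (hcomp.hasDerivWithinAt.congr (fun s hs => hadd s hs) (hadd 0 le_rfl))
    hshift.hasDerivWithinAt

end Flow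

theorem stmt_8_general {n : ℕ} (D : Set (Fin n → ℝ)) (hD : IsOpen D)
    (f : (Fin n → ℝ) → (Fin n → ℝ)) (hf : ContDiffOn ℝ 1 f D)
    (φ : ℝ → (Fin n → ℝ) → (Fin n → ℝ))
    (hφ0 : ∀ x ∈ D, φ 0 x = x)
    (hφ' : ∀ x ∈ D, ∀ t : ℝ, 0 ≤ t → HasDerivAt (fun τ => φ τ x) (f (φ t x)) t)
    (C : Set (Fin n → ℝ)) (hCopen : IsOpen C) (hCD : C ⊆ D)
    (hCinv : ∀ t : ℝ, 0 ≤ t → ∀ x ∈ C, φ t x ∈ C)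
    (K : Set (Fin n → ℝ)) (hKclosed : IsClosed K)
    (hKscale : ∀ c : ℝ, 0 ≤ c → ∀ x ∈ K, c • x ∈ K)
    (hKadd : ∀ x ∈ K, ∀ y ∈ K, x + y ∈ K)
    (hφC1 : ∀ t : ℝ, 0 ≤ t → ContDiffOn ℝ 1 (φ t) C)
    (τ₀ : ℝ) (hτ₀ : 0 ≤ τ₀)
    (hmon : ∀ x ∈ C, ∀ y ∈ C, x - y ∈ K → ∀ t : ℝ, τ₀ ≤ t → φ t x - φ t y ∈ K)
    (x : Fin n → ℝ) (hx : x ∈ C) (hfx : f x ∈ K) :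
    (∀ t : ℝ, τ₀ ≤ t → f (φ t x) ∈ K) ∧
    (∀ t : ℝ, τ₀ ≤ t → ∀ Δt : ℝ, 0 < Δt → φ (t + Δt) x - φ t x ∈ K) := by
  have hxD : x ∈ D := hCD hx
  have hfK : ∀ t : ℝ, τ₀ ≤ t → f (φ t x) ∈ K := by
    intro t ht
    have ht0 : 0 ≤ t := hτ₀.trans ht
    have hA : HasFDerivAt (φ t) (fderiv ℝ (φ t) x) x :=
      ((hφC1 t ht0).differentiableOn one_ne_zero).differentiableAt (hCopen.mem_nhds hx)
        |>.hasFDerivAt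
    rw [← hA.apply_vectorField_eq (hφ0 x hxD) (hφ' x hxD)
      (fun s hs => flow_add hD hf hφ0 hφ' hCD hCinv hx hs ht0) ht0]
    exact hA.apply_mem_of_sub_mem hCopen hx hKscale hKclosed hKscale
      (fun y hy z hz hyz => hmon y hy z hz hyz t ht) hfx
  refine ⟨hfK, fun t ht Δt hΔt => ?_⟩
  have hderiv : ∀ s ∈ Icc t (t + Δt), HasDerivAt (fun τ => φ τ x) (f (φ s x)) s :=
    fun s hs => hφ' x hxD s ((hτ₀.trans ht).trans hs.1)
  have hcont : ContinuousOn (fun s => f (φ s x)) (Icc t (t + Δt)) :=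
    hf.continuousOn.comp (HasDerivAt.continuousOn hderiv)
      fun s hs => hCD (hCinv s ((hτ₀.trans ht).trans hs.1) x hx)
  exact sub_mem_of_hasDerivAt_mem hKclosed hKscale hKadd (by linarith) hderiv hcont
    fun s hs => hfK s (ht.trans hs.1)

/-- For a uniformly eventually monotone system (with uniform time `τ₀`) on an open
forward-invariant set `C` with respect to a closed positive cone `K`, whose flow maps are
`C¹` on `C`: if `f(x) ∈ K` for some `x ∈ C`, then `f(φ(t,x)) ∈ K` for all `t ≥ τ₀`, and
consequently `φ(t+Δt,x) ⪰_K φ(t,x)` for all `Δt > 0` and `t ≥ τ₀`. -/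
theorem stmt_8 {n : ℕ} (D : Set (Fin n → ℝ)) (hD : IsOpen D)
    (f : (Fin n → ℝ) → (Fin n → ℝ)) (hf : ContDiffOn ℝ 1 f D)
    (φ : ℝ → (Fin n → ℝ) → (Fin n → ℝ))
    (hφ0 : ∀ x ∈ D, φ 0 x = x)
    (hφ' : ∀ x ∈ D, ∀ t : ℝ, 0 ≤ t → HasDerivAt (fun τ => φ τ x) (f (φ t x)) t)
    (C : Set (Fin n → ℝ)) (hCopen : IsOpen C) (hCD : C ⊆ D)
    (hCinv : ∀ t : ℝ, 0 ≤ t → ∀ x ∈ C, φ t x ∈ C)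
    (K : Set (Fin n → ℝ)) (hKclosed : IsClosed K)
    (hKscale : ∀ c : ℝ, 0 ≤ c → ∀ x ∈ K, c • x ∈ K)
    (hKadd : ∀ x ∈ K, ∀ y ∈ K, x + y ∈ K)
    (hKpointed : ∀ x ∈ K, -x ∈ K → x = 0)
    (hφC1 : ∀ t : ℝ, 0 ≤ t → ContDiffOn ℝ 1 (φ t) C)
    (τ₀ : ℝ) (hτ₀ : 0 ≤ τ₀)
    (hmon : ∀ x ∈ C, ∀ y ∈ C, x - y ∈ K → ∀ t : ℝ, τ₀ ≤ t → φ t x - φ t y ∈ K)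
    (x : Fin n → ℝ) (hx : x ∈ C) (hfx : f x ∈ K) :
    (∀ t : ℝ, τ₀ ≤ t → f (φ t x) ∈ K) ∧
    (∀ t : ℝ, τ₀ ≤ t → ∀ Δt : ℝ, 0 < Δt → φ (t + Δt) x - φ t x ∈ K) :=
  stmt_8_general D hD f hf φ hφ0 hφ' C hCopen hCD hCinv K hKclosed hKscale hKadd hφC1 τ₀ hτ₀ hmon x
    hx hfx
end

section
/- Let C ⊆ D be an open, forward-invariant set, let K be a closed positive cone, suppose x ↦ φ(t,x) is continuously differentiable on C for each t ≥ 0, and suppose the system ẋ = f(x) is uniformly eventually monotone on C with respect to K. Suppose x* ∈ C is an equilibrium (f(x*) = 0) whose basin of attraction B(x*) = { x ∈ C : φ(t,x) → x* as t → ∞ } is contained in C. Then for every x ∈ B(x*) with x ≻_K x*: f(x) ∉ K \ {0}, and φ(t,x) − x ∉ K \ {0} for every t > 0. -/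
/-!
Let `T ≥ 0` be a monotonicity time. If `f x ∈ K`, the trajectory of `x` is `K`-increasing after
`T`: the linearisation `Dφ_t(x)` maps `K` into `K` (it is a limit of difference quotients of a
monotone map) and sends `f x` to `f (φ t x)`. If instead `φ t x - x ∈ K`, monotonicity applied
along the times `T + k t` gives an increasing sequence. In both cases the limit `x*` satisfies
`φ T x ⪯ x*`, while monotonicity applied to `x ⪰ x*` gives `φ T x ⪰ x*`. As `K` is salient,
`φ T x = x*`, and backward uniqueness of solutions forces `x = x*`.
-/

open Set Filter Topology

variable {E : Type*} [NormedAddCommGroup E] [NormedSpace ℝ E]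

theorem eqOn_Icc_of_hasDerivAt_of_locallyLipschitzOn {s : Set E} {f : E → E}
    (hf : LocallyLipschitzOn s f) {y z : ℝ → E} {a b : ℝ}
    (hy : ∀ t ∈ Icc a b, HasDerivAt y (f (y t)) t ∧ y t ∈ s)
    (hz : ∀ t ∈ Icc a b, HasDerivAt z (f (z t)) t ∧ z t ∈ s)
    (ha : y a = z a) : EqOn y z (Icc a b) := by
  have hyc : ContinuousOn y (Icc a b) := fun t ht => (hy t ht).1.continuousAt.continuousWithinAt
  have hzc : ContinuousOn z (Icc a b) := fun t ht => (hz t ht).1.continuousAt.continuousWithinAt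
  refine fun t ht =>
    IsClosed.Icc_subset_of_forall_mem_nhdsWithin (s := {t | y t = z t}) ?_ ha ?_ ht
  · rw [inter_comm]
    exact (hyc.prodMk hzc).preimage_isClosed_of_isClosed isClosed_Icc isClosed_diagonal
  rintro t₀ ⟨heq, ht₀⟩
  have ht₀' := Ico_subset_Icc_self ht₀
  obtain ⟨L, U, hU, hLip⟩ := hf (hy t₀ ht₀').2
  obtain ⟨V, hVo, hV, hVU⟩ := mem_nhdsWithin.1 hU
  have hnear : {t | y t ∈ V ∧ z t ∈ V} ∈ 𝓝 t₀ :=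
    inter_mem ((hy t₀ ht₀').1.continuousAt.preimage_mem_nhds (hVo.mem_nhds hV))
      ((hz t₀ ht₀').1.continuousAt.preimage_mem_nhds (hVo.mem_nhds (heq ▸ hV)))
  obtain ⟨t₁, ⟨ht₀₁, ht₁b⟩, hsub⟩ := exists_Ico_subset_of_mem_nhds' hnear ht₀.2
  have hsub' : Ico t₀ t₁ ⊆ Icc a b := Ico_subset_Icc_self.trans (Icc_subset_Icc ht₀.1 ht₁b)
  refine mem_of_superset (Icc_mem_nhdsGT ht₀₁) <|
    ODE_solution_unique_of_mem_Icc_right (v := fun _ => f) (s := fun _ => V ∩ s)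
      (fun _ _ => hLip.mono hVU) (hyc.mono (Icc_subset_Icc ht₀.1 ht₁b))
      (fun t ht => (hy t (hsub' ht)).1.hasDerivWithinAt)
      (fun t ht => ⟨(hsub ht).1, (hy t (hsub' ht)).2⟩) (hzc.mono (Icc_subset_Icc ht₀.1 ht₁b))
      (fun t ht => (hz t (hsub' ht)).1.hasDerivWithinAt)
      (fun t ht => ⟨(hsub ht).2, (hz t (hsub' ht)).2⟩) heq

namespace ProperCone

theorem sub_mem_of_hasDerivAt (K : ProperCone ℝ E) {g g' : ℝ → E} {a b : ℝ} (hab : a ≤ b)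
    (hg : ∀ t ∈ Icc a b, HasDerivAt g (g' t) t) (hg' : ∀ t ∈ Icc a b, g' t ∈ K) :
    g b - g a ∈ K := by
  by_contra hnot
  obtain ⟨ℓ, hℓK, hℓ⟩ := K.hyperplane_separation_point hnot
  have hmono : MonotoneOn (fun t => ℓ (g t)) (Icc a b) := by
    refine monotoneOn_of_hasDerivWithinAt_nonneg (convex_Icc a b)
      (fun t ht => (ℓ.continuous.continuousAt.comp (hg t ht).continuousAt).continuousWithinAt)
      (fun t ht => (ℓ.hasFDerivAt.comp_hasDerivAt t
        (hg t (interior_subset ht))).hasDerivWithinAt)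
      (fun t ht => hℓK _ (hg' t (interior_subset ht)))
  have hab' : ℓ (g a) ≤ ℓ (g b) := hmono (left_mem_Icc.2 hab) (right_mem_Icc.2 hab) hab
  rw [map_sub] at hℓ
  linarith

theorem apply_mem_of_hasFDerivAt {G : Type*} [NormedAddCommGroup G] [NormedSpace ℝ G]
    (K : ProperCone ℝ E) (K' : ProperCone ℝ G) {C : Set E} (hC : IsOpen C) {F : E → G}
    {L : E →L[ℝ] G} {x : E} (hx : x ∈ C) (hL : HasFDerivAt F L x)
    (hF : ∀ y ∈ C, y - x ∈ K → F y - F x ∈ K') {v : E} (hv : v ∈ K) : L v ∈ K' := by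
  refine K'.isClosed.mem_of_tendsto (hL.lim_real v) ?_
  have hnear : Tendsto (fun c : ℝ => x + c⁻¹ • v) atTop (𝓝 x) := by
    simpa using ((tendsto_inv_atTop_zero (𝕜 := ℝ)).smul_const v).const_add x
  filter_upwards [hnear (hC.mem_nhds hx), eventually_gt_atTop 0] with c hcC hc
  refine K'.smul_mem (hF _ hcC ?_) hc.le
  simpa using K.smul_mem hv (inv_nonneg.2 hc.le)

end ProperCone

structure IsForwardFlowOn (f : E → E) (φ : ℝ → E → E) (C : Set E) : Prop where
  map_zero : ∀ x ∈ C, φ 0 x = x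
  hasDerivAt : ∀ x ∈ C, ∀ t, 0 ≤ t → HasDerivAt (fun τ => φ τ x) (f (φ t x)) t
  map_mem : ∀ x ∈ C, ∀ t, 0 ≤ t → φ t x ∈ C

def IsEventuallyMonotoneOn (φ : ℝ → E → E) (C : Set E) (K : ProperCone ℝ E) (T : ℝ) : Prop :=
  ∀ x ∈ C, ∀ y ∈ C, x - y ∈ K → ∀ t, T ≤ t → φ t x - φ t y ∈ K

namespace IsForwardFlowOn

variable {f : E → E} {φ : ℝ → E → E} {C : Set E}

theorem map_add (hφ : IsForwardFlowOn f φ C) (hf : LocallyLipschitzOn C f) {x : E} (hx : x ∈ C)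
    {s t : ℝ} (hs : 0 ≤ s) (ht : 0 ≤ t) : φ (s + t) x = φ s (φ t x) := by
  have hxt := hφ.map_mem x hx t ht
  refine eqOn_Icc_of_hasDerivAt_of_locallyLipschitzOn hf (y := fun τ => φ (τ + t) x)
    (fun τ hτ => ⟨(hφ.hasDerivAt x hx _ (by linarith [hτ.1])).comp_add_const τ t,
      hφ.map_mem x hx _ (by linarith [hτ.1])⟩)
    (fun τ hτ => ⟨hφ.hasDerivAt _ hxt τ hτ.1, hφ.map_mem _ hxt τ hτ.1⟩)
    (by simp only [zero_add, hφ.map_zero _ hxt]) (right_mem_Icc.2 hs)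

theorem map_eq_of_apply_eq_zero (hφ : IsForwardFlowOn f φ C) (hf : LocallyLipschitzOn C f)
    {x₀ : E} (hx₀ : x₀ ∈ C) (h₀ : f x₀ = 0) {t : ℝ} (ht : 0 ≤ t) : φ t x₀ = x₀ :=
  eqOn_Icc_of_hasDerivAt_of_locallyLipschitzOn hf (z := fun _ => x₀)
    (fun τ hτ => ⟨hφ.hasDerivAt x₀ hx₀ τ hτ.1, hφ.map_mem x₀ hx₀ τ hτ.1⟩)
    (fun τ _ => ⟨h₀ ▸ hasDerivAt_const τ x₀, hx₀⟩) (hφ.map_zero x₀ hx₀) (right_mem_Icc.2 ht)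

theorem eq_of_map_eq_of_apply_eq_zero (hφ : IsForwardFlowOn f φ C)
    (hf : LocallyLipschitzOn C f) {x₀ : E} (hx₀ : x₀ ∈ C) (h₀ : f x₀ = 0) {x : E} (hx : x ∈ C)
    {t : ℝ} (ht : 0 ≤ t) (hxt : φ t x = x₀) : x = x₀ := by
  have key := eqOn_Icc_of_hasDerivAt_of_locallyLipschitzOn hf.neg (y := fun τ => φ (t - τ) x)
    (z := fun _ => x₀)
    (fun τ hτ => ⟨(hφ.hasDerivAt x hx _ (by linarith [hτ.2])).comp_const_sub t τ,
      hφ.map_mem x hx _ (by linarith [hτ.2])⟩)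
    (fun τ _ => ⟨by simpa [h₀] using hasDerivAt_const τ x₀, hx₀⟩)
    (by simpa using hxt) (right_mem_Icc.2 ht)
  simpa [hφ.map_zero x hx] using key

theorem apply_map_eq_of_hasFDerivAt (hφ : IsForwardFlowOn f φ C) (hf : LocallyLipschitzOn C f)
    {x : E} (hx : x ∈ C) {t : ℝ} (ht : 0 ≤ t) {L : E →L[ℝ] E} (hL : HasFDerivAt (φ t) L x) :
    L (f x) = f (φ t x) := by
  have hcomp : HasDerivAt (fun s => φ t (φ s x)) (L (f x)) 0 := by
    have h0 := hφ.hasDerivAt x hx 0 le_rfl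
    rw [hφ.map_zero x hx] at h0
    exact hL.comp_hasDerivAt_of_eq 0 h0 (hφ.map_zero x hx).symm
  have hshift : HasDerivAt (fun s => φ (t + s) x) (f (φ t x)) 0 :=
    .comp_const_add t 0 (by rw [add_zero]; exact hφ.hasDerivAt x hx t ht)
  refine (uniqueDiffOn_Ici 0 0 self_mem_Ici).eq_deriv _ ?_ hshift.hasDerivWithinAt
  exact hcomp.hasDerivWithinAt.congr_of_mem (fun s hs => hφ.map_add hf hx ht hs) self_mem_Ici

variable {K : ProperCone ℝ E} {T : ℝ}

theorem eq_of_map_le_equilibrium (hφ : IsForwardFlowOn f φ C) (hf : LocallyLipschitzOn C f)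
    (hmon : IsEventuallyMonotoneOn φ C K T) (hT : 0 ≤ T) (hK : ∀ v ∈ K, -v ∈ K → v = 0)
    {x₀ : E} (hx₀ : x₀ ∈ C) (h₀ : f x₀ = 0) {x : E} (hx : x ∈ C) (hxx₀ : x - x₀ ∈ K)
    (hle : x₀ - φ T x ∈ K) : x = x₀ := by
  have hge : φ T x - x₀ ∈ K :=
    hφ.map_eq_of_apply_eq_zero hf hx₀ h₀ hT ▸ hmon x hx x₀ hx₀ hxx₀ T le_rfl
  have hTx : φ T x - x₀ = 0 := hK _ hge (by rwa [neg_sub])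
  exact hφ.eq_of_map_eq_of_apply_eq_zero hf hx₀ h₀ hx hT (sub_eq_zero.1 hTx)

theorem map_sub_map_mem_of_apply_mem (hφ : IsForwardFlowOn f φ C) (hf : LocallyLipschitzOn C f)
    (hC : IsOpen C) (hmon : IsEventuallyMonotoneOn φ C K T) (hT : 0 ≤ T) {x : E} (hx : x ∈ C)
    (hdiff : ∀ t, T ≤ t → DifferentiableAt ℝ (φ t) x) (hfx : f x ∈ K) {s : ℝ} (hs : T ≤ s) :
    φ s x - φ T x ∈ K := by
  have hflow : ∀ t, T ≤ t → f (φ t x) ∈ K := fun t ht =>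
    hφ.apply_map_eq_of_hasFDerivAt hf hx (hT.trans ht) (hdiff t ht).hasFDerivAt ▸
      K.apply_mem_of_hasFDerivAt K hC hx (hdiff t ht).hasFDerivAt
        (fun y hy hyx => hmon y hy x hx hyx t ht) hfx
  exact K.sub_mem_of_hasDerivAt hs (fun t ht => hφ.hasDerivAt x hx t (hT.trans ht.1))
    (fun t ht => hflow t ht.1)

theorem map_sub_map_mem_of_map_sub_mem (hφ : IsForwardFlowOn f φ C)
    (hf : LocallyLipschitzOn C f) (hmon : IsEventuallyMonotoneOn φ C K T) (hT : 0 ≤ T)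
    {x : E} (hx : x ∈ C) {t : ℝ} (ht : 0 ≤ t) (hxt : φ t x - x ∈ K) (k : ℕ) :
    φ (T + k * t) x - φ T x ∈ K := by
  induction k with
  | zero => simp
  | succ k ih =>
    have hkt : 0 ≤ T + k * t := by positivity
    have hstep := hmon _ (hφ.map_mem x hx t ht) x hx hxt (T + k * t) (by nlinarith)
    rw [← hφ.map_add hf hx hkt ht] at hstep
    have hidx : T + ((k + 1 : ℕ) : ℝ) * t = T + k * t + t := by push_cast; ring
    rw [hidx, ← sub_add_sub_cancel _ (φ (T + k * t) x)]
    exact K.add_mem hstep ih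

end IsForwardFlowOn

theorem stmt_9_general {n : ℕ} (D : Set (Fin n → ℝ))
    (f : (Fin n → ℝ) → (Fin n → ℝ)) (hf : ContDiffOn ℝ 1 f D)
    (φ : ℝ → (Fin n → ℝ) → (Fin n → ℝ))
    (hφ0 : ∀ x ∈ D, φ 0 x = x)
    (hφ' : ∀ x ∈ D, ∀ t : ℝ, 0 ≤ t → HasDerivAt (fun τ => φ τ x) (f (φ t x)) t)
    (C : Set (Fin n → ℝ)) (hCopen : IsOpen C) (hCD : C ⊆ D)
    (hCinv : ∀ t : ℝ, 0 ≤ t → ∀ x ∈ C, φ t x ∈ C)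
    (K : Set (Fin n → ℝ)) (hKclosed : IsClosed K)
    (hKscale : ∀ c : ℝ, 0 ≤ c → ∀ x ∈ K, c • x ∈ K)
    (hKadd : ∀ x ∈ K, ∀ y ∈ K, x + y ∈ K)
    (hKpointed : ∀ x ∈ K, -x ∈ K → x = 0)
    (hφC1 : ∀ t : ℝ, 0 ≤ t → ContDiffOn ℝ 1 (φ t) C)
    (τ₀ : ℝ)
    (hmon : ∀ x ∈ C, ∀ y ∈ C, x - y ∈ K → ∀ t : ℝ, τ₀ ≤ t → φ t x - φ t y ∈ K)
    (xs : Fin n → ℝ) (hxs : xs ∈ C) (heq : f xs = 0)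
    (B : Set (Fin n → ℝ))
    (hB : B = {x ∈ C | Filter.Tendsto (fun t : ℝ => φ t x) Filter.atTop (nhds xs)}) :
    ∀ x ∈ B, x - xs ∈ K → x ≠ xs →
      f x ∉ K \ {0} ∧ ∀ t : ℝ, 0 < t → φ t x - x ∉ K \ {0} := by
  rintro x hxB hxK hne
  rw [hB] at hxB
  obtain ⟨hxC, hlim⟩ := hxB
  let Kc : ProperCone ℝ (Fin n → ℝ) :=
    { carrier := K
      add_mem' := fun hu hv => hKadd _ hu _ hv
      zero_mem' := by simpa using hKscale 0 le_rfl _ hxK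
      smul_mem' := fun c _ hv => hKscale c c.2 _ hv
      isClosed' := hKclosed }
  have hφ : IsForwardFlowOn f φ C :=
    ⟨fun x hx => hφ0 x (hCD hx), fun x hx => hφ' x (hCD hx), fun x hx t ht => hCinv t ht x hx⟩
  have hfC : LocallyLipschitzOn C f := fun y hy =>
    ((hf.mono hCD).contDiffAt (hCopen.mem_nhds hy)).exists_lipschitzOnWith.imp
      fun _ ⟨U, hU, hLip⟩ => ⟨U, mem_nhdsWithin_of_mem_nhds hU, hLip⟩
  set T := max τ₀ 0
  have hT : 0 ≤ T := le_max_right _ _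
  have hmonT : IsEventuallyMonotoneOn φ C Kc T := fun y hy z hz hyz t ht =>
    hmon y hy z hz hyz t (le_of_max_le_left ht)
  have hbelow : xs - φ T x ∉ K := fun hle =>
    hne (hφ.eq_of_map_le_equilibrium hfC hmonT hT hKpointed hxs heq hxC hxK hle)
  constructor
  · rintro ⟨hfx, -⟩
    refine hbelow (hKclosed.mem_of_tendsto (hlim.sub_const _) ?_)
    filter_upwards [eventually_ge_atTop T] with s hs
    exact hφ.map_sub_map_mem_of_apply_mem hfC hCopen hmonT hT hxC
      (fun t ht => ((hφC1 t (hT.trans ht)).contDiffAt (hCopen.mem_nhds hxC)).differentiableAt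
        one_ne_zero) hfx hs
  · rintro t ht ⟨hxt, -⟩
    have hsteps : Tendsto (fun k : ℕ => T + k * t) atTop atTop :=
      tendsto_atTop_add_const_left atTop T (tendsto_natCast_atTop_atTop.atTop_mul_const ht)
    exact hbelow (hKclosed.mem_of_tendsto ((hlim.comp hsteps).sub_const _)
      (Eventually.of_forall (hφ.map_sub_map_mem_of_map_sub_mem hfC hmonT hT hxC ht.le hxt)))

/-- For a uniformly eventually monotone system on an open forward-invariant set `C` with
respect to a closed positive cone `K`, with an equilibrium `x* ∈ C` whose basin of
attraction `B(x*) ⊆ C`: every `x ∈ B(x*)` with `x ≻_K x*` satisfies `f(x) ∉ K \ {0}` and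
`φ(t,x) − x ∉ K \ {0}` for all `t > 0`. -/
theorem stmt_9 {n : ℕ} (D : Set (Fin n → ℝ)) (hD : IsOpen D)
    (f : (Fin n → ℝ) → (Fin n → ℝ)) (hf : ContDiffOn ℝ 1 f D)
    (φ : ℝ → (Fin n → ℝ) → (Fin n → ℝ))
    (hφ0 : ∀ x ∈ D, φ 0 x = x)
    (hφ' : ∀ x ∈ D, ∀ t : ℝ, 0 ≤ t → HasDerivAt (fun τ => φ τ x) (f (φ t x)) t)
    (C : Set (Fin n → ℝ)) (hCopen : IsOpen C) (hCD : C ⊆ D)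
    (hCinv : ∀ t : ℝ, 0 ≤ t → ∀ x ∈ C, φ t x ∈ C)
    (K : Set (Fin n → ℝ)) (hKclosed : IsClosed K)
    (hKscale : ∀ c : ℝ, 0 ≤ c → ∀ x ∈ K, c • x ∈ K)
    (hKadd : ∀ x ∈ K, ∀ y ∈ K, x + y ∈ K)
    (hKpointed : ∀ x ∈ K, -x ∈ K → x = 0)
    (hφC1 : ∀ t : ℝ, 0 ≤ t → ContDiffOn ℝ 1 (φ t) C)
    (τ₀ : ℝ) (hτ₀ : 0 ≤ τ₀)
    (hmon : ∀ x ∈ C, ∀ y ∈ C, x - y ∈ K → ∀ t : ℝ, τ₀ ≤ t → φ t x - φ t y ∈ K)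
    (xs : Fin n → ℝ) (hxs : xs ∈ C) (heq : f xs = 0)
    (B : Set (Fin n → ℝ))
    (hB : B = {x ∈ C | Filter.Tendsto (fun t : ℝ => φ t x) Filter.atTop (nhds xs)})
    (hBC : B ⊆ C) :
    ∀ x ∈ B, x - xs ∈ K → x ≠ xs →
      f x ∉ K \ {0} ∧ ∀ t : ℝ, 0 < t → φ t x - x ∉ K \ {0} :=
  stmt_9_general D f hf φ hφ0 hφ' C hCopen hCD hCinv K hKclosed hKscale hKadd hKpointed hφC1 τ₀ hmon
    xs hxs heq B hB
end

section
/- Let B ⊆ ℝⁿ be open, x* ∈ B, and let φ : ℝ≥0 × B → B be the flow of ẋ = f(x) on B. Let J ∈ ℝ^{n×n} be Hurwitz (every complex eigenvalue has negative real part). Suppose h : B → V ⊆ ℝⁿ is a C¹ diffeomorphism onto an open set V containing 0, with h(x*) = 0, Dh(x*) = I (identity matrix), and h(φ(t,x)) = e^{Jt} h(x) for all t ≥ 0 and x ∈ B. Then for every x ∈ B, the function t ↦ φ(t,x) − x* − e^{Jt} h(x) is o(‖e^{Jt} h(x)‖) as t → ∞ (i.e., for every ε > 0 there exists T such that ‖φ(t,x)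 − x* − e^{Jt}h(x)‖ ≤ ε‖e^{Jt}h(x)‖ for all t ≥ T). -/
/-!
Since `h` conjugates the flow to `t ↦ e^{tJ}`, its left inverse `g` gives
`φ(t,x) = g(e^{tJ} h(x))`. As `J` is Hurwitz, `e^{tJ} v → 0` for every `v`: on a generalized
eigenvector for `μ`, `e^{tJ}` acts as `e^{tμ}` times a polynomial in `t`, and these vectors span
`ℂⁿ`. By the inverse function theorem `g` has derivative `I` at `0 = h(x*)`, i.e.
`g(y) = x* + y + o(‖y‖)` as `y → 0`; now substitute `y = e^{tJ} h(x)`.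
-/

open NormedSpace Filter Topology Finset

theorem ContDiffOn.hasFDerivAt_id_of_leftInvOn {E : Type*} [NormedAddCommGroup E]
    [NormedSpace ℝ E] [CompleteSpace E] {h g : E → E} {s : Set E} {a : E} (hs : IsOpen s)
    (ha : a ∈ s) (hh : ContDiffOn ℝ 1 h s) (hDh : fderiv ℝ h a = ContinuousLinearMap.id ℝ E)
    (hgh : ∀ x ∈ s, g (h x) = x) : HasFDerivAt g (ContinuousLinearMap.id ℝ E) (h a) := by
  have hstrict :
      HasStrictFDerivAt h ((ContinuousLinearEquiv.refl ℝ E : E ≃L[ℝ] E) : E →L[ℝ] E) a := by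
    simpa [hDh] using (hh.contDiffAt (hs.mem_nhds ha)).hasStrictFDerivAt one_ne_zero
  simpa using (hstrict.to_local_left_inverse (eventually_of_mem (hs.mem_nhds ha) hgh)).hasFDerivAt

theorem Complex.tendsto_exp_mul_mul_pow_atTop {μ : ℂ} (hμ : μ.re < 0) (j : ℕ) :
    Tendsto (fun t : ℝ => Complex.exp (t * μ) * (t : ℂ) ^ j) atTop (𝓝 0) := by
  rw [tendsto_zero_iff_norm_tendsto_zero]
  refine (tendsto_rpow_mul_exp_neg_mul_atTop_nhds_zero j (-μ.re) (by linarith)).congr' ?_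
  filter_upwards [eventually_ge_atTop 0] with t ht
  rw [norm_mul, Complex.norm_exp, norm_pow, Complex.norm_real, Real.norm_of_nonneg ht,
    Real.rpow_natCast, mul_comm]
  simp [mul_comm]

namespace Matrix

variable {m : Type*} [Fintype m] [DecidableEq m]

section LinftyOpNorm

open scoped Norms.Operator

theorem exp_smul_mulVec_eq_sum_of_pow_mulVec_eq_zero {𝕂 : Type*} [RCLike 𝕂] {N : Matrix m m 𝕂}
    {v : m → 𝕂} {k : ℕ} (hv : N ^ k *ᵥ v = 0) (t : 𝕂) :
    exp (t • N) *ᵥ v = ∑ j ∈ range k, (t ^ j / j.factorial) • (N ^ j *ᵥ v) := by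
  have hseries := (exp_series_hasSum_exp' (𝕂 := 𝕂) (t • N)).map ((mulVecBilin 𝕂 𝕂).flip v)
    (continuous_id.matrix_mulVec continuous_const)
  have hterm : ∀ j,
      ((j.factorial : 𝕂)⁻¹ • (t • N) ^ j) *ᵥ v = (t ^ j / j.factorial) • (N ^ j *ᵥ v) := by
    intro j
    rw [smul_pow, smul_mulVec, smul_mulVec, smul_smul, div_eq_inv_mul]
  have hvanish : ∀ j ∉ range k, N ^ j *ᵥ v = 0 := by
    intro j hj
    rw [mem_range, not_lt] at hj
    rw [← Nat.sub_add_cancel hj, pow_add, ← mulVec_mulVec, hv, mulVec_zero]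
  simp only [Function.comp_def, LinearMap.flip_apply, mulVecBilin_apply, hterm] at hseries
  refine hseries.unique (hasSum_sum_of_ne_finset_zero fun j hj => ?_)
  rw [hvanish j hj, smul_zero]

theorem exp_smul_mulVec_eq_sum_of_pow_sub_smul_mulVec_eq_zero {A : Matrix m m ℂ} {μ : ℂ}
    {v : m → ℂ} {k : ℕ} (hv : (A - μ • 1) ^ k *ᵥ v = 0) (t : ℂ) :
    exp (t • A) *ᵥ v =
      ∑ j ∈ range k, (Complex.exp (t * μ) * (t ^ j / j.factorial)) • ((A - μ • 1) ^ j *ᵥ v) := by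
  have hsplit : t • A = (t * μ) • (1 : Matrix m m ℂ) + t • (A - μ • 1) := by
    rw [smul_sub, smul_smul]
    abel
  have hscalar : exp ((t * μ) • (1 : Matrix m m ℂ)) = Complex.exp (t * μ) • 1 := by
    have := algebraMap_exp_comm (𝔸 := Matrix m m ℂ) (t * μ)
    rw [Algebra.algebraMap_eq_smul_one, Algebra.algebraMap_eq_smul_one,
      ← Complex.exp_eq_exp_ℂ] at this
    exact this.symm
  rw [hsplit, exp_add_of_commute _ _ ((Commute.one_left _).smul_left _), hscalar, smul_one_mul,
    smul_mulVec, exp_smul_mulVec_eq_sum_of_pow_mulVec_eq_zero hv, smul_sum]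
  simp only [smul_smul]

theorem map_ofReal_exp (J : Matrix m m ℝ) :
    (exp J).map Complex.ofReal = exp (J.map Complex.ofReal) :=
  map_exp (Complex.ofRealHom.mapMatrix : Matrix m m ℝ →+* Matrix m m ℂ)
    (continuous_id.matrix_map Complex.continuous_ofReal) J

end LinftyOpNorm

theorem tendsto_exp_smul_mulVec_atTop_of_mem_maxGenEigenspace {A : Matrix m m ℂ} {μ : ℂ}
    (hμ : μ.re < 0) {v : m → ℂ} (hv : v ∈ Module.End.maxGenEigenspace (toLin' A) μ) :
    Tendsto (fun t : ℝ => exp ((t : ℂ) • A) *ᵥ v) atTop (𝓝 0) := by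
  obtain ⟨k, hk⟩ := (Module.End.mem_maxGenEigenspace _ _ _).mp hv
  have hkv : (A - μ • 1) ^ k *ᵥ v = 0 := by
    rwa [← toLin'_apply, toLin'_pow, map_sub, map_smul, toLin'_one]
  simp_rw [exp_smul_mulVec_eq_sum_of_pow_sub_smul_mulVec_eq_zero hkv, ← mul_div_assoc]
  simpa using tendsto_finsetSum (range k) fun j _ =>
    ((Complex.tendsto_exp_mul_mul_pow_atTop hμ j).div_const (j.factorial : ℂ)).smul_const
      ((A - μ • 1) ^ j *ᵥ v)

theorem tendsto_exp_smul_mulVec_atTop_of_forall_isRoot_charpoly {A : Matrix m m ℂ}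
    (hA : ∀ μ : ℂ, A.charpoly.IsRoot μ → μ.re < 0) (v : m → ℂ) :
    Tendsto (fun t : ℝ => exp ((t : ℂ) • A) *ᵥ v) atTop (𝓝 0) := by
  have hv : v ∈ ⨆ μ, Module.End.maxGenEigenspace (toLin' A) μ := by
    rw [Module.End.iSup_maxGenEigenspace_eq_top]
    trivial
  refine Submodule.iSup_induction _
    (motive := fun w => Tendsto (fun t : ℝ => exp ((t : ℂ) • A) *ᵥ w) atTop (𝓝 0)) hv
    (fun μ w hw => ?_) (by simp)
    fun w w' hw hw' => by simpa [mulVec_add] using hw.add hw'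
  rcases eq_or_ne w 0 with rfl | hw0
  · simp
  have hroot : A.charpoly.IsRoot μ := by
    rw [← charpoly_toLin', ← Module.End.hasEigenvalue_iff_isRoot_charpoly,
      Module.End.HasEigenvalue, ← Module.End.hasUnifEigenvalue_iff_hasUnifEigenvalue_one
        (k := ⊤) (by simp)]
    exact (Submodule.ne_bot_iff _).mpr ⟨w, hw, hw0⟩
  exact tendsto_exp_smul_mulVec_atTop_of_mem_maxGenEigenspace (hA μ hroot) hw

theorem tendsto_exp_smul_mulVec_atTop_of_forall_isRoot_charpoly_map {J : Matrix m m ℝ}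
    (hJ : ∀ μ : ℂ, (J.map Complex.ofReal).charpoly.IsRoot μ → μ.re < 0) (w : m → ℝ) :
    Tendsto (fun t : ℝ => exp (t • J) *ᵥ w) atTop (𝓝 0) := by
  have hre : Continuous fun z : m → ℂ => fun i => (z i).re := by fun_prop
  have hc : Tendsto (fun t : ℝ => fun i =>
      ((exp ((t : ℂ) • J.map Complex.ofReal) *ᵥ (Complex.ofReal ∘ w)) i).re) atTop (𝓝 0) :=
    (hre.tendsto 0).comp
      (tendsto_exp_smul_mulVec_atTop_of_forall_isRoot_charpoly hJ (Complex.ofReal ∘ w))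
  refine hc.congr fun t => funext fun i => ?_
  have hmap : (t : ℂ) • J.map Complex.ofReal = (t • J).map Complex.ofReal := by
    ext; simp
  rw [hmap, ← map_ofReal_exp]
  exact (congrArg Complex.re (Complex.ofRealHom.map_mulVec (exp (t • J)) w i)).symm.trans
    (Complex.ofReal_re _)

end Matrix

theorem stmt_11_general {n : ℕ} (B : Set (Fin n → ℝ)) (hBopen : IsOpen B)
    (xs : Fin n → ℝ) (hxs : xs ∈ B)
    (φ : ℝ → (Fin n → ℝ) → (Fin n → ℝ))
    (hφB : ∀ t : ℝ, 0 ≤ t → ∀ x ∈ B, φ t x ∈ B)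
    (J : Matrix (Fin n) (Fin n) ℝ)
    (hHurwitz : ∀ μ : ℂ, (Matrix.charpoly (J.map Complex.ofReal)).IsRoot μ → μ.re < 0)
    (h : (Fin n → ℝ) → (Fin n → ℝ)) (g : (Fin n → ℝ) → (Fin n → ℝ))
    (hhC1 : ContDiffOn ℝ 1 h B)
    (hinv : ∀ x ∈ B, g (h x) = x)
    (hhxs : h xs = 0)
    (hDh : fderiv ℝ h xs = ContinuousLinearMap.id ℝ (Fin n → ℝ))
    (hconj : ∀ t : ℝ, 0 ≤ t → ∀ x ∈ B,
      h (φ t x) = (NormedSpace.exp (t • J)).mulVec (h x)) :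
    ∀ x ∈ B, ∀ ε : ℝ, 0 < ε → ∃ T : ℝ, ∀ t : ℝ, T ≤ t →
      ‖φ t x - xs - (NormedSpace.exp (t • J)).mulVec (h x)‖ ≤
        ε * ‖(NormedSpace.exp (t • J)).mulVec (h x)‖ := by
  intro x hx ε hε
  have hg := hhC1.hasFDerivAt_id_of_leftInvOn hBopen hxs hDh hinv
  rw [hhxs] at hg
  have hgx : g 0 = xs := hhxs ▸ hinv xs hxs
  have hsmall := (hg.isLittleO.comp_tendsto
    (Matrix.tendsto_exp_smul_mulVec_atTop_of_forall_isRoot_charpoly_map hHurwitz (h x))).def hε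
  obtain ⟨T, hT⟩ := eventually_atTop.1 (hsmall.and (eventually_ge_atTop 0))
  refine ⟨T, fun t ht => ?_⟩
  obtain ⟨hbound, ht0⟩ := hT t ht
  have hφt : φ t x = g ((exp (t • J)).mulVec (h x)) := by
    rw [← hconj t ht0 x hx, hinv _ (hφB t ht0 x hx)]
  simpa [hφt, hgx] using hbound

/-- Koopman expansion of the flow: if `h` is a `C¹` diffeomorphism of the basin `B` onto a
neighborhood `V` of `0` linearizing the flow (`h(φ(t,x)) = e^{Jt}h(x)`, `h(x*) = 0`,
`Dh(x*) = I`) with `J` Hurwitz, then `φ(t,x) − x* − e^{Jt}h(x) = o(‖e^{Jt}h(x)‖)` as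
`t → ∞`, for every `x ∈ B`. -/
theorem stmt_11 {n : ℕ} (B : Set (Fin n → ℝ)) (hBopen : IsOpen B)
    (xs : Fin n → ℝ) (hxs : xs ∈ B)
    (f : (Fin n → ℝ) → (Fin n → ℝ))
    (φ : ℝ → (Fin n → ℝ) → (Fin n → ℝ))
    (hφ0 : ∀ x ∈ B, φ 0 x = x)
    (hφB : ∀ t : ℝ, 0 ≤ t → ∀ x ∈ B, φ t x ∈ B)
    (hφ' : ∀ x ∈ B, ∀ t : ℝ, 0 ≤ t → HasDerivAt (fun τ => φ τ x) (f (φ t x)) t)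
    (J : Matrix (Fin n) (Fin n) ℝ)
    (hHurwitz : ∀ μ : ℂ, (Matrix.charpoly (J.map Complex.ofReal)).IsRoot μ → μ.re < 0)
    (V : Set (Fin n → ℝ)) (hVopen : IsOpen V) (hV0 : (0 : Fin n → ℝ) ∈ V)
    (h : (Fin n → ℝ) → (Fin n → ℝ)) (g : (Fin n → ℝ) → (Fin n → ℝ))
    (hhC1 : ContDiffOn ℝ 1 h B) (hgC1 : ContDiffOn ℝ 1 g V)
    (himage : h '' B = V)
    (hinv : ∀ x ∈ B, g (h x) = x) (hinv' : ∀ y ∈ V, h (g y) = y)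
    (hhxs : h xs = 0)
    (hDh : fderiv ℝ h xs = ContinuousLinearMap.id ℝ (Fin n → ℝ))
    (hconj : ∀ t : ℝ, 0 ≤ t → ∀ x ∈ B,
      h (φ t x) = (NormedSpace.exp (t • J)).mulVec (h x)) :
    ∀ x ∈ B, ∀ ε : ℝ, 0 < ε → ∃ T : ℝ, ∀ t : ℝ, T ≤ t →
      ‖φ t x - xs - (NormedSpace.exp (t • J)).mulVec (h x)‖ ≤
        ε * ‖(NormedSpace.exp (t • J)).mulVec (h x)‖ :=
  stmt_11_general B hBopen xs hxs φ hφB J hHurwitz h g hhC1 hinv hhxs hDh hconj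
end

section
/- Let K be a positive cone, let C ⊆ D, and suppose the system ẋ = f(x) is eventually monotone on C with respect to K. Let λ₁ < 0 be a real number and let g : ℝⁿ → ℝ be continuous and monotone with respect to K (g(a) ≥ g(b) whenever a ⪰_K b). Let x, y ∈ C with x ⪰_K y, and suppose the Laplace averages s(x) = lim_{t→∞} (1/t) ∫₀ᵗ g(φ(σ,x)) e^{−λ₁ σ} dσ and s(y) = lim_{t→∞} (1/t) ∫₀ᵗ g(φ(σ,y)) e^{−λ₁ σ} dσ both exist in ℝ. Then s(x) ≥ s(y). -/
/-!
Eventual monotonicity gives `φ σ x ⪰_K φ σ y` for `σ ≥ τ₀`, hence `g (φ σ y) ≤ g (φ σ x)` there, and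
the positive weight `exp (-λ₁ σ)` preserves this. The integrands of the two averages therefore
differ, up to time `t`, by a fixed integral over `[0, τ₀]` plus a nonnegative one, and the fixed part
is killed by the factor `1 / t`.
-/

open Filter Topology MeasureTheory

theorem nonneg_of_tendsto_average_of_eventually_nonneg {w : ℝ → ℝ} {L : ℝ}
    (hw : ∀ t, 0 ≤ t → IntervalIntegrable w volume 0 t) (hnonneg : ∀ᶠ σ in atTop, 0 ≤ w σ)
    (hL : Tendsto (fun t => t⁻¹ * ∫ σ in (0 : ℝ)..t, w σ) atTop (𝓝 L)) :
    0 ≤ L := by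
  obtain ⟨a, ha⟩ := eventually_atTop.1 hnonneg
  set τ := max a 0
  set c := ∫ σ in (0 : ℝ)..τ, w σ
  have hτ : 0 ≤ τ := le_max_right a 0
  have hc_le : ∀ t, τ ≤ t → c ≤ ∫ σ in (0 : ℝ)..t, w σ := by
    intro t ht
    have hwτt : IntervalIntegrable w volume τ t := (hw τ hτ).symm.trans (hw t (hτ.trans ht))
    rw [← intervalIntegral.integral_add_adjacent_intervals (hw τ hτ) hwτt, le_add_iff_nonneg_right]
    exact intervalIntegral.integral_nonneg ht fun σ hσ => ha σ ((le_max_left a 0).trans hσ.1)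
  have hbound : ∀ᶠ t in atTop, t⁻¹ * c ≤ t⁻¹ * ∫ σ in (0 : ℝ)..t, w σ := by
    filter_upwards [eventually_ge_atTop τ, eventually_gt_atTop 0] with t hτt ht
    exact mul_le_mul_of_nonneg_left (hc_le t hτt) (inv_nonneg.2 ht.le)
  have hdecay : Tendsto (fun t : ℝ => t⁻¹ * c) atTop (𝓝 0) := by
    simpa using tendsto_inv_atTop_zero.mul_const c
  exact le_of_tendsto_of_tendsto hdecay hL hbound

theorem le_of_tendsto_average_of_eventually_le {u v : ℝ → ℝ} {a b : ℝ}
    (hu : ∀ t, 0 ≤ t → IntervalIntegrable u volume 0 t)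
    (hv : ∀ t, 0 ≤ t → IntervalIntegrable v volume 0 t) (hle : ∀ᶠ σ in atTop, v σ ≤ u σ)
    (ha : Tendsto (fun t => t⁻¹ * ∫ σ in (0 : ℝ)..t, u σ) atTop (𝓝 a))
    (hb : Tendsto (fun t => t⁻¹ * ∫ σ in (0 : ℝ)..t, v σ) atTop (𝓝 b)) :
    b ≤ a := by
  have hdiff : Tendsto (fun t => t⁻¹ * ∫ σ in (0 : ℝ)..t, (u - v) σ) atTop (𝓝 (a - b)) := by
    refine (ha.sub hb).congr' ?_
    filter_upwards [eventually_ge_atTop 0] with t ht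
    rw [Pi.sub_def, intervalIntegral.integral_sub (hu t ht) (hv t ht), mul_sub]
  exact sub_nonneg.1 <| nonneg_of_tendsto_average_of_eventually_nonneg
    (fun t ht => (hu t ht).sub (hv t ht)) (hle.mono fun σ => sub_nonneg.2) hdiff

theorem stmt_12_general {n : ℕ} (D : Set (Fin n → ℝ))
    (f : (Fin n → ℝ) → (Fin n → ℝ))
    (φ : ℝ → (Fin n → ℝ) → (Fin n → ℝ))
    (hφ' : ∀ x ∈ D, ∀ t : ℝ, 0 ≤ t → HasDerivAt (fun τ => φ τ x) (f (φ t x)) t)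
    (K : Set (Fin n → ℝ))
    (C : Set (Fin n → ℝ)) (hCD : C ⊆ D)
    (hmon : ∀ x ∈ C, ∀ y ∈ C, x - y ∈ K → ∃ τ₀ : ℝ, 0 ≤ τ₀ ∧ ∀ t : ℝ, τ₀ ≤ t →
      φ t x - φ t y ∈ K)
    (l₁ : ℝ)
    (g : (Fin n → ℝ) → ℝ) (hgcont : Continuous g)
    (hgmon : ∀ a b : Fin n → ℝ, a - b ∈ K → g b ≤ g a)
    (x y : Fin n → ℝ) (hx : x ∈ C) (hy : y ∈ C) (hxy : x - y ∈ K)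
    (sx sy : ℝ)
    (hsx : Filter.Tendsto
      (fun t : ℝ => (1 / t) * ∫ σ in (0:ℝ)..t, g (φ σ x) * Real.exp (-l₁ * σ))
      Filter.atTop (nhds sx))
    (hsy : Filter.Tendsto
      (fun t : ℝ => (1 / t) * ∫ σ in (0:ℝ)..t, g (φ σ y) * Real.exp (-l₁ * σ))
      Filter.atTop (nhds sy)) :
    sy ≤ sx := by
  have hintegrable : ∀ z ∈ D, ∀ t, 0 ≤ t →
      IntervalIntegrable (fun σ => g (φ σ z) * Real.exp (-l₁ * σ)) volume 0 t := by
    intro z hz t ht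
    have htraj : ContinuousOn (fun σ => φ σ z) (Set.Icc 0 t) :=
      fun σ hσ => (hφ' z hz σ hσ.1).continuousAt.continuousWithinAt
    exact ((hgcont.comp_continuousOn htraj).mul (by fun_prop)).intervalIntegrable_of_Icc ht
  obtain ⟨τ₀, -, hτ₀⟩ := hmon x hx y hy hxy
  refine le_of_tendsto_average_of_eventually_le (hintegrable x (hCD hx)) (hintegrable y (hCD hy))
    ?_ (by simpa only [one_div] using hsx) (by simpa only [one_div] using hsy)
  filter_upwards [eventually_ge_atTop τ₀] with σ hσ
  exact mul_le_mul_of_nonneg_right (hgmon _ _ (hτ₀ σ hσ)) (Real.exp_pos _).le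

/-- Monotonicity of Laplace averages: if the system is eventually monotone on `C` with
respect to a positive cone `K`, `g` is continuous and monotone with respect to `K`,
`λ₁ < 0`, and the Laplace averages of `g` along the trajectories from `x ⪰_K y` exist,
then they are ordered accordingly. -/
theorem stmt_12 {n : ℕ} (D : Set (Fin n → ℝ)) (hD : IsOpen D)
    (f : (Fin n → ℝ) → (Fin n → ℝ)) (hf : ContDiffOn ℝ 1 f D)
    (φ : ℝ → (Fin n → ℝ) → (Fin n → ℝ))
    (hφ0 : ∀ x ∈ D, φ 0 x = x)
    (hφ' : ∀ x ∈ D, ∀ t : ℝ, 0 ≤ t → HasDerivAt (fun τ => φ τ x) (f (φ t x)) t)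
    (K : Set (Fin n → ℝ))
    (hKscale : ∀ c : ℝ, 0 ≤ c → ∀ x ∈ K, c • x ∈ K)
    (hKadd : ∀ x ∈ K, ∀ y ∈ K, x + y ∈ K)
    (hKpointed : ∀ x ∈ K, -x ∈ K → x = 0)
    (C : Set (Fin n → ℝ)) (hCD : C ⊆ D)
    (hmon : ∀ x ∈ C, ∀ y ∈ C, x - y ∈ K → ∃ τ₀ : ℝ, 0 ≤ τ₀ ∧ ∀ t : ℝ, τ₀ ≤ t →
      φ t x - φ t y ∈ K)
    (l₁ : ℝ) (hl₁ : l₁ < 0)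
    (g : (Fin n → ℝ) → ℝ) (hgcont : Continuous g)
    (hgmon : ∀ a b : Fin n → ℝ, a - b ∈ K → g b ≤ g a)
    (x y : Fin n → ℝ) (hx : x ∈ C) (hy : y ∈ C) (hxy : x - y ∈ K)
    (sx sy : ℝ)
    (hsx : Filter.Tendsto
      (fun t : ℝ => (1 / t) * ∫ σ in (0:ℝ)..t, g (φ σ x) * Real.exp (-l₁ * σ))
      Filter.atTop (nhds sx))
    (hsy : Filter.Tendsto
      (fun t : ℝ => (1 / t) * ∫ σ in (0:ℝ)..t, g (φ σ y) * Real.exp (-l₁ * σ))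
      Filter.atTop (nhds sy)) :
    sy ≤ sx :=
  stmt_12_general D f φ hφ' K C hCD hmon l₁ g hgcont hgmon x y hx hy hxy sx sy hsx hsy
end

section
/- Let K be a positive cone with nonempty interior, let C ⊆ D be forward-invariant, and suppose the system ẋ = f(x) is strongly eventually monotone on C with respect to K. Let λ₁ ∈ ℝ and let s₁ : C → ℝ satisfy the Koopman eigenfunction relation s₁(φ(t,x)) = e^{λ₁ t} s₁(x) for all t ≥ 0 and x ∈ C, and suppose s₁(z) > s₁(w) for all z, w ∈ C with z ≫_K w, and s₁(z) ≥ s₁(w) for all z, w ∈ C with z ⪰_K w. Then s₁(x) > s₁(y) for all x, y ∈ C with x ≻_K y. -/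
/-! Strong eventual monotonicity carries `x ≻_K y` to `φ(τ,x) ≫_K φ(τ,y)` for some `τ ≥ 0`,
where `s₁` separates the two points; the eigenfunction relation transports this back to time `0`,
since it only rescales `s₁` by the positive factor `e^{λ₁ τ}`. -/

theorem lt_of_lt_of_eigenfunction {α : Type*} {φ : ℝ → α → α} {s : α → ℝ} {l t : ℝ} {x y : α}
    (hx : s (φ t x) = Real.exp (l * t) * s x) (hy : s (φ t y) = Real.exp (l * t) * s y)
    (h : s (φ t y) < s (φ t x)) : s y < s x := by
  rw [hx, hy] at h
  exact lt_of_mul_lt_mul_left h (Real.exp_pos _).le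

theorem stmt_13_general {n : ℕ}
    (φ : ℝ → (Fin n → ℝ) → (Fin n → ℝ))
    (K : Set (Fin n → ℝ))
    (C : Set (Fin n → ℝ))
    (hCinv : ∀ t : ℝ, 0 ≤ t → ∀ x ∈ C, φ t x ∈ C)
    (hsmon : ∀ x ∈ C, ∀ y ∈ C, x - y ∈ K → x ≠ y → ∃ τ₀ : ℝ, 0 ≤ τ₀ ∧ ∀ t : ℝ, τ₀ ≤ t →
      φ t x - φ t y ∈ interior K)
    (l₁ : ℝ) (s₁ : (Fin n → ℝ) → ℝ)
    (heig : ∀ t : ℝ, 0 ≤ t → ∀ x ∈ C, s₁ (φ t x) = Real.exp (l₁ * t) * s₁ x)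
    (hstrict : ∀ z ∈ C, ∀ w ∈ C, z - w ∈ interior K → s₁ w < s₁ z) :
    ∀ x ∈ C, ∀ y ∈ C, x - y ∈ K → x ≠ y → s₁ y < s₁ x := by
  intro x hx y hy hxy hne
  obtain ⟨τ, hτ, hstrong⟩ := hsmon x hx y hy hxy hne
  have hsep : s₁ (φ τ y) < s₁ (φ τ x) :=
    hstrict _ (hCinv τ hτ x hx) _ (hCinv τ hτ y hy) (hstrong τ le_rfl)
  exact lt_of_lt_of_eigenfunction (heig τ hτ x hx) (heig τ hτ y hy) hsep

/-- For a strongly eventually monotone system on a forward-invariant set `C` with respect to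
a positive cone `K` with nonempty interior, a Koopman eigenfunction `s₁` that is monotone
(`z ⪰_K w → s₁(z) ≥ s₁(w)`) and strictly monotone on the strong order
(`z ≫_K w → s₁(z) > s₁(w)`) is strictly monotone on the strict order:
`x ≻_K y → s₁(x) > s₁(y)`. -/
theorem stmt_13 {n : ℕ} (D : Set (Fin n → ℝ)) (hD : IsOpen D)
    (f : (Fin n → ℝ) → (Fin n → ℝ)) (hf : ContDiffOn ℝ 1 f D)
    (φ : ℝ → (Fin n → ℝ) → (Fin n → ℝ))
    (hφ0 : ∀ x ∈ D, φ 0 x = x)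
    (hφ' : ∀ x ∈ D, ∀ t : ℝ, 0 ≤ t → HasDerivAt (fun τ => φ τ x) (f (φ t x)) t)
    (K : Set (Fin n → ℝ))
    (hKscale : ∀ c : ℝ, 0 ≤ c → ∀ x ∈ K, c • x ∈ K)
    (hKadd : ∀ x ∈ K, ∀ y ∈ K, x + y ∈ K)
    (hKpointed : ∀ x ∈ K, -x ∈ K → x = 0)
    (hKint : (interior K).Nonempty)
    (C : Set (Fin n → ℝ)) (hCD : C ⊆ D)
    (hCinv : ∀ t : ℝ, 0 ≤ t → ∀ x ∈ C, φ t x ∈ C)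
    (hmon : ∀ x ∈ C, ∀ y ∈ C, x - y ∈ K → ∃ τ₀ : ℝ, 0 ≤ τ₀ ∧ ∀ t : ℝ, τ₀ ≤ t →
      φ t x - φ t y ∈ K)
    (hsmon : ∀ x ∈ C, ∀ y ∈ C, x - y ∈ K → x ≠ y → ∃ τ₀ : ℝ, 0 ≤ τ₀ ∧ ∀ t : ℝ, τ₀ ≤ t →
      φ t x - φ t y ∈ interior K)
    (l₁ : ℝ) (s₁ : (Fin n → ℝ) → ℝ)
    (heig : ∀ t : ℝ, 0 ≤ t → ∀ x ∈ C, s₁ (φ t x) = Real.exp (l₁ * t) * s₁ x)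
    (hstrict : ∀ z ∈ C, ∀ w ∈ C, z - w ∈ interior K → s₁ w < s₁ z)
    (hge : ∀ z ∈ C, ∀ w ∈ C, z - w ∈ K → s₁ w ≤ s₁ z) :
    ∀ x ∈ C, ∀ y ∈ C, x - y ∈ K → x ≠ y → s₁ y < s₁ x :=
  stmt_13_general φ K C hCinv hsmon l₁ s₁ heig hstrict
end

section
/- Let K be a closed positive cone with nonempty interior, let v₁ ∈ int(K), let λ₁ ∈ ℝ, and let s₁ : C → ℝ satisfy s₁(x) > s₁(y) for all x, y ∈ C with x ≻_K y. Suppose that for all x, y ∈ C and t ≥ 0 the flow satisfies φ(t,x) − φ(t,y) = e^{λ₁ t} ( v₁ (s₁(x) − s₁(y)) + R̄(t,x,y) ), where for each fixed x, y ∈ C, R̄(t,x,y) → 0 as t → ∞. Then the system is strongly eventually monotone on C with respect to K: for all x, y ∈ C with x ⪰_K y there exists τ₀ ≥ 0 with φ(t,x) ⪰_K φ(t,y) for all t ≥ τ₀, and for all x, y ∈ C with x ≻_K y there exists τ₀ ≥ 0 with φ(t,x) − φ(t,y) ∈ int(K) for all t ≥ τ₀. -/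
open Filter Topology Pointwise

/-
For `x ≻_K y` the bracket `(s₁ x - s₁ y) • v₁ + R̄(t,x,y)` tends to a positive multiple
of `v₁`, a point of the open set `int K`, so it eventually lies in `int K`; multiplying by the
positive factor `e^{λ₁ t}` keeps it there because `int K` is again closed under positive scaling.
For `x = y` the difference is `0 ∈ K`.
-/

section Cone

variable {E : Type*} [AddCommGroup E] [Module ℝ E] [TopologicalSpace E]
  [ContinuousConstSMul ℝ E] {K : Set E}

theorem smul_mem_interior_of_smul_mem (hK : ∀ c : ℝ, 0 ≤ c → ∀ x ∈ K, c • x ∈ K)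
    {c : ℝ} (hc : 0 < c) {x : E} (hx : x ∈ interior K) : c • x ∈ interior K := by
  have hcK : c • K ⊆ K := by
    rintro _ ⟨y, hy, rfl⟩
    exact hK c hc.le y hy
  have : c • x ∈ interior (c • K) := by
    rw [interior_smul₀ hc.ne']
    exact Set.smul_mem_smul_set hx
  exact interior_mono hcK this

variable [ContinuousAdd E]

theorem eventually_smul_smul_add_mem_interior (hK : ∀ c : ℝ, 0 ≤ c → ∀ x ∈ K, c • x ∈ K)
    {v : E} (hv : v ∈ interior K) {a : ℝ} (ha : 0 < a) {α : Type*} {l : Filter α}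
    {R : α → E} (hR : Tendsto R l (𝓝 0)) {c : α → ℝ} (hc : ∀ t, 0 < c t) :
    ∀ᶠ t in l, c t • (a • v + R t) ∈ interior K := by
  have hav : a • v ∈ interior K := smul_mem_interior_of_smul_mem hK ha hv
  have hlim : Tendsto (fun t => a • v + R t) l (𝓝 (a • v)) := by
    simpa using hR.const_add (a • v)
  filter_upwards [hlim (isOpen_interior.mem_nhds hav)] with t ht
  exact smul_mem_interior_of_smul_mem hK (hc t) ht

end Cone

theorem exists_nonneg_forall_ge_of_eventually_atTop {P : ℝ → Prop} (h : ∀ᶠ t in atTop, P t) :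
    ∃ τ₀ : ℝ, 0 ≤ τ₀ ∧ ∀ t : ℝ, τ₀ ≤ t → P t := by
  obtain ⟨a, ha⟩ := eventually_atTop.mp h
  exact ⟨max a 0, le_max_right a 0, fun t ht => ha t (le_of_max_le_left ht)⟩

theorem stmt_14_general {n : ℕ} (C : Set (Fin n → ℝ))
    (φ : ℝ → (Fin n → ℝ) → (Fin n → ℝ))
    (K : Set (Fin n → ℝ))
    (hKscale : ∀ c : ℝ, 0 ≤ c → ∀ x ∈ K, c • x ∈ K)
    (v₁ : Fin n → ℝ) (hv₁ : v₁ ∈ interior K)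
    (l₁ : ℝ) (s₁ : (Fin n → ℝ) → ℝ)
    (hs₁ : ∀ x ∈ C, ∀ y ∈ C, x - y ∈ K → x ≠ y → s₁ y < s₁ x)
    (R : ℝ → (Fin n → ℝ) → (Fin n → ℝ) → (Fin n → ℝ))
    (hR : ∀ x ∈ C, ∀ y ∈ C,
      Filter.Tendsto (fun t : ℝ => R t x y) Filter.atTop (nhds 0))
    (hexp : ∀ x ∈ C, ∀ y ∈ C, ∀ t : ℝ, 0 ≤ t →
      φ t x - φ t y = Real.exp (l₁ * t) • ((s₁ x - s₁ y) • v₁ + R t x y)) :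
    (∀ x ∈ C, ∀ y ∈ C, x - y ∈ K → ∃ τ₀ : ℝ, 0 ≤ τ₀ ∧ ∀ t : ℝ, τ₀ ≤ t →
      φ t x - φ t y ∈ K) ∧
    (∀ x ∈ C, ∀ y ∈ C, x - y ∈ K → x ≠ y → ∃ τ₀ : ℝ, 0 ≤ τ₀ ∧ ∀ t : ℝ, τ₀ ≤ t →
      φ t x - φ t y ∈ interior K) := by
  have strong : ∀ x ∈ C, ∀ y ∈ C, x - y ∈ K → x ≠ y → ∃ τ₀ : ℝ, 0 ≤ τ₀ ∧
      ∀ t : ℝ, τ₀ ≤ t → φ t x - φ t y ∈ interior K := by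
    intro x hx y hy hxy hne
    have hs : 0 < s₁ x - s₁ y := sub_pos.mpr (hs₁ x hx y hy hxy hne)
    apply exists_nonneg_forall_ge_of_eventually_atTop
    filter_upwards [eventually_smul_smul_add_mem_interior hKscale hv₁ hs (hR x hx y hy)
      (fun t => Real.exp_pos (l₁ * t)), eventually_ge_atTop 0] with t ht ht₀
    rwa [hexp x hx y hy t ht₀]
  refine ⟨fun x hx y hy hxy => ?_, strong⟩
  rcases eq_or_ne x y with rfl | hne
  · exact ⟨0, le_rfl, fun t _ => by simpa using hKscale 0 le_rfl v₁ (interior_subset hv₁)⟩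
  · obtain ⟨τ₀, hτ₀, h⟩ := strong x hx y hy hxy hne
    exact ⟨τ₀, hτ₀, fun t ht => interior_subset (h t ht)⟩

/-- Sufficiency part of the spectral characterization of strong eventual monotonicity: if
the flow admits the dominant Koopman expansion
`φ(t,x) − φ(t,y) = e^{λ₁ t}(v₁(s₁(x) − s₁(y)) + R̄(t,x,y))` with `v₁ ∈ int(K)`,
`s₁` strictly increasing on `≻_K`, and `R̄(t,x,y) → 0` as `t → ∞`, then the system is
strongly eventually monotone on `C` with respect to the closed positive cone `K`. -/
theorem stmt_14 {n : ℕ} (C : Set (Fin n → ℝ))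
    (φ : ℝ → (Fin n → ℝ) → (Fin n → ℝ))
    (K : Set (Fin n → ℝ)) (hKclosed : IsClosed K)
    (hKscale : ∀ c : ℝ, 0 ≤ c → ∀ x ∈ K, c • x ∈ K)
    (hKadd : ∀ x ∈ K, ∀ y ∈ K, x + y ∈ K)
    (hKpointed : ∀ x ∈ K, -x ∈ K → x = 0)
    (hKint : (interior K).Nonempty)
    (v₁ : Fin n → ℝ) (hv₁ : v₁ ∈ interior K)
    (l₁ : ℝ) (s₁ : (Fin n → ℝ) → ℝ)
    (hs₁ : ∀ x ∈ C, ∀ y ∈ C, x - y ∈ K → x ≠ y → s₁ y < s₁ x)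
    (R : ℝ → (Fin n → ℝ) → (Fin n → ℝ) → (Fin n → ℝ))
    (hR : ∀ x ∈ C, ∀ y ∈ C,
      Filter.Tendsto (fun t : ℝ => R t x y) Filter.atTop (nhds 0))
    (hexp : ∀ x ∈ C, ∀ y ∈ C, ∀ t : ℝ, 0 ≤ t →
      φ t x - φ t y = Real.exp (l₁ * t) • ((s₁ x - s₁ y) • v₁ + R t x y)) :
    (∀ x ∈ C, ∀ y ∈ C, x - y ∈ K → ∃ τ₀ : ℝ, 0 ≤ τ₀ ∧ ∀ t : ℝ, τ₀ ≤ t →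
      φ t x - φ t y ∈ K) ∧
    (∀ x ∈ C, ∀ y ∈ C, x - y ∈ K → x ≠ y → ∃ τ₀ : ℝ, 0 ≤ τ₀ ∧ ∀ t : ℝ, τ₀ ≤ t →
      φ t x - φ t y ∈ interior K) :=
  stmt_14_general C φ K hKscale v₁ hv₁ l₁ s₁ hs₁ R hR hexp
end

section
/- Let K ⊆ ℝⁿ be a closed positive cone with dual cone K* = { u ∈ ℝⁿ : uᵀz ≥ 0 for all z ∈ K }, let C ⊆ ℝⁿ be open and p-convex with respect to K (for all x, y ∈ C with x ⪰_K y and all μ ∈ (0,1), μx + (1−μ)y ∈ C), and let s₁ : C → ℝ be continuously differentiable. Then s₁ is monotone with respect to K on C (s₁(x) ≥ s₁(y) whenever x, y ∈ C and x ⪰_K y) if and only if ∇s₁(x) ∈ K* for all x ∈ C. -/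
/-! Monotonicity forces every difference quotient of `s₁` at `x` in a direction `z ∈ K` to be
nonnegative, so the directional derivative `∇s₁(x) ⬝ᵥ z` is too. Conversely, p-convexity puts the
whole segment from `y` to `x ⪰_K y` inside `C`, and the mean value theorem on that segment writes
`s₁ x - s₁ y` as a directional derivative in the direction `x - y ∈ K`. -/

open Matrix Filter Topology

theorem dotProduct_map_single_one {ι R F : Type*} [Fintype ι] [DecidableEq ι] [CommSemiring R]
    [FunLike F (ι → R) R] [LinearMapClass F R (ι → R) R] (f : F) (z : ι → R) :
    (fun i => f (Pi.single i 1)) ⬝ᵥ z = f z := by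
  conv_rhs => rw [pi_eq_sum_univ' z, map_sum]
  simp [dotProduct, mul_comm]

section Directional

variable {E : Type*} [NormedAddCommGroup E] [NormedSpace ℝ E] {f : E → ℝ} {x z : E}

theorem HasFDerivAt.apply_nonneg_of_le_add_smul {f' : E →L[ℝ] ℝ} (hf : HasFDerivAt f f' x)
    (h : ∀ᶠ t in 𝓝[>] (0 : ℝ), f x ≤ f (x + t • z)) : 0 ≤ f' z := by
  have hline : HasDerivAt (fun t : ℝ => f (x + t • z)) (f' z) 0 := by
    have hφ : HasDerivAt (fun t : ℝ => x + t • z) z 0 := by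
      simpa using ((hasDerivAt_id (0 : ℝ)).smul_const z).const_add x
    exact (by simpa using hf : HasFDerivAt f f' (x + (0 : ℝ) • z)).comp_hasDerivAt 0 hφ
  have hslope := (hasDerivAt_iff_tendsto_slope.mp hline).mono_left
    (nhdsWithin_mono _ fun t (ht : t ∈ Set.Ioi 0) => ht.ne')
  refine ge_of_tendsto hslope ?_
  filter_upwards [h, self_mem_nhdsWithin] with t hle (ht : t ∈ Set.Ioi 0)
  rw [slope_def_field, zero_smul, add_zero, sub_zero]
  exact div_nonneg (sub_nonneg.mpr hle) ht.le

theorem eventually_add_smul_mem_nhds {s : Set E} (hs : s ∈ 𝓝 x) :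
    ∀ᶠ t in 𝓝 (0 : ℝ), x + t • z ∈ s :=
  (Continuous.tendsto' (by fun_prop) 0 x (by simp)).eventually hs

theorem le_of_fderiv_apply_nonneg_on_segment {y : E}
    (hf : ∀ p ∈ segment ℝ y x, DifferentiableAt ℝ f p)
    (h : ∀ p ∈ segment ℝ y x, 0 ≤ fderiv ℝ f p (x - y)) : f y ≤ f x := by
  obtain ⟨p, hp, hmvt⟩ := domain_mvt (fun p hp => (hf p hp).hasFDerivAt.hasFDerivWithinAt)
    (convex_segment y x) (left_mem_segment ℝ y x) (right_mem_segment ℝ y x)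
  linarith [h p hp]

end Directional

theorem segment_subset_of_forall_combo_mem {E : Type*} [AddCommGroup E] [Module ℝ E]
    {C : Set E} {x y : E} (hx : x ∈ C) (hy : y ∈ C)
    (h : ∀ μ : ℝ, μ ∈ Set.Ioo (0 : ℝ) 1 → μ • x + (1 - μ) • y ∈ C) : segment ℝ y x ⊆ C := by
  rw [← insert_endpoints_openSegment, openSegment_eq_image]
  rintro p (rfl | rfl | ⟨μ, hμ, rfl⟩)
  exacts [hy, hx, (add_comm (μ • x) _ ▸ h μ hμ : (1 - μ) • y + μ • x ∈ C)]

theorem stmt_18_general {n : ℕ} (K : Set (Fin n → ℝ))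
    (hKscale : ∀ c : ℝ, 0 ≤ c → ∀ x ∈ K, c • x ∈ K)
    (Kstar : Set (Fin n → ℝ))
    (hKstar : Kstar = {u : Fin n → ℝ | ∀ z ∈ K, 0 ≤ u ⬝ᵥ z})
    (C : Set (Fin n → ℝ)) (hCopen : IsOpen C)
    (hpconv : ∀ x ∈ C, ∀ y ∈ C, x - y ∈ K → ∀ μ : ℝ, μ ∈ Set.Ioo (0 : ℝ) 1 →
      μ • x + (1 - μ) • y ∈ C)
    (s₁ : (Fin n → ℝ) → ℝ) (hs₁ : ContDiffOn ℝ 1 s₁ C) :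
    (∀ x ∈ C, ∀ y ∈ C, x - y ∈ K → s₁ y ≤ s₁ x) ↔
      (∀ x ∈ C, (fun i => fderiv ℝ s₁ x (Pi.single i 1)) ∈ Kstar) := by
  have hdiff : ∀ x ∈ C, DifferentiableAt ℝ s₁ x := fun x hx =>
    (hs₁.differentiableOn one_ne_zero).differentiableAt (hCopen.mem_nhds hx)
  simp only [hKstar, Set.mem_ofPred_eq, dotProduct_map_single_one]
  constructor
  · intro hmono x hx z hz
    refine (hdiff x hx).hasFDerivAt.apply_nonneg_of_le_add_smul ?_
    filter_upwards [nhdsWithin_le_nhds (eventually_add_smul_mem_nhds (hCopen.mem_nhds hx)),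
      self_mem_nhdsWithin] with t htC (ht : 0 < t)
    exact hmono _ htC x hx (by simpa using hKscale t ht.le z hz)
  · intro hgrad x hx y hy hxy
    have hseg := segment_subset_of_forall_combo_mem hx hy (hpconv x hx y hy hxy)
    exact le_of_fderiv_apply_nonneg_on_segment (fun p hp => hdiff p (hseg hp))
      (fun p hp => hgrad p (hseg hp) _ hxy)

/-- A continuously differentiable function `s₁` on an open p-convex set `C` is monotone with
respect to a closed positive cone `K` if and only if its gradient lies in the dual cone `K*`
everywhere on `C`. -/
theorem stmt_18 {n : ℕ} (K : Set (Fin n → ℝ)) (hKclosed : IsClosed K)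
    (hKscale : ∀ c : ℝ, 0 ≤ c → ∀ x ∈ K, c • x ∈ K)
    (hKadd : ∀ x ∈ K, ∀ y ∈ K, x + y ∈ K)
    (hKpointed : ∀ x ∈ K, -x ∈ K → x = 0)
    (Kstar : Set (Fin n → ℝ))
    (hKstar : Kstar = {u : Fin n → ℝ | ∀ z ∈ K, 0 ≤ u ⬝ᵥ z})
    (C : Set (Fin n → ℝ)) (hCopen : IsOpen C)
    (hpconv : ∀ x ∈ C, ∀ y ∈ C, x - y ∈ K → ∀ μ : ℝ, μ ∈ Set.Ioo (0 : ℝ) 1 →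
      μ • x + (1 - μ) • y ∈ C)
    (s₁ : (Fin n → ℝ) → ℝ) (hs₁ : ContDiffOn ℝ 1 s₁ C) :
    (∀ x ∈ C, ∀ y ∈ C, x - y ∈ K → s₁ y ≤ s₁ x) ↔
      (∀ x ∈ C, (fun i => fderiv ℝ s₁ x (Pi.single i 1)) ∈ Kstar) :=
  stmt_18_general K hKscale Kstar hKstar C hCopen hpconv s₁ hs₁
end
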